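/- arXiv:1902.03321 — 3 statements merged into one kernel-verified Lean document; each statement's English description precedes it below -/
import Mathlib

section
/- For every n ≥ 7, the minimum of c_5 over all rooted binary tree shapes with n leaves is attained uniquely at the maximally balanced shape, i.e., the unique shape in RB_U(n) such that at every internal vertex the numbers of leaves in the two child subtrees differ by at most one. -/
/-! ## Rooted binary trees, shapes, restriction, distributions -/

/-- Rooted binary trees with leaves labelled by `α`:
a tree is either a single (labelled) leaf, or an (ordered) pair of subtrees. -/
inductive RBT (α : Type) : Type
  | leaf (a : α) : RBT α
  | node (l r : RBT α) : RBT α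
  deriving DecidableEq

namespace RBT

variable {α β : Type}

/-- The multiset of leaf labels of a tree. -/
def leaves : RBT α → Multiset α
  | leaf a => {a}
  | node l r => leaves l + leaves r

/-- The number of leaves of a tree. -/
def numLeaves : RBT α → ℕ
  | leaf _ => 1
  | node l r => numLeaves l + numLeaves r

/-- Relabel the leaves of a tree. -/
def map (f : α → β) : RBT α → RBT β
  | leaf a => leaf (f a)
  | node l r => node (map f l) (map f r)

end RBT

/-- Unlabelled rooted binary trees. -/
abbrev UTree : Type := RBT Unit

namespace RBT

variable {α : Type}

/-- Forget the leaf labels of a tree. -/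
def forget (t : RBT α) : UTree := t.map fun _ => ()

/-- Structural comparison on unlabelled trees (a leaf is smaller than an internal
node; internal nodes are compared lexicographically on their children). -/
def cmpT : UTree → UTree → Ordering
  | leaf _, leaf _ => .eq
  | leaf _, node _ _ => .lt
  | node _ _, leaf _ => .gt
  | node a b, node c d => (cmpT a c).then (cmpT b d)

/-- Canonical form (AHU) of an unlabelled rooted binary tree: recursively put the
two children of every internal vertex in nondecreasing `cmpT` order.  Two rooted
binary trees are isomorphic (equal as *shapes*) iff their canonical forms are
equal, so canonical forms faithfully encode the set `RB_U` of tree shapes. -/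
def canon : UTree → UTree
  | leaf a => leaf a
  | node l r =>
      let l' := canon l
      let r' := canon r
      if cmpT l' r' = Ordering.gt then node r' l' else node l' r'

/-- The shape (leaf-relabelling isomorphism class, encoded as a canonical form)
of a labelled tree. -/
def shape (t : RBT α) : UTree := canon (forget t)

/-- Restriction `T|_A` of a tree to the leaves with labels in `A`: delete all
leaves outside `A` and suppress the resulting degree-two vertices (the result is
rooted at the most recent common ancestor of `A`); `none` if no leaf survives. -/
def restrict [DecidableEq α] (A : Finset α) : RBT α → Option (RBT α)
  | leaf a => if a ∈ A then some (leaf a) else none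
  | node l r =>
      match restrict A l, restrict A r with
      | some l', some r' => some (node l' r')
      | some l', none => some l'
      | none, some r' => some r'
      | none, none => none

end RBT

/-- `T ∈ RB_L(n)`: the leaves of `T` are labelled bijectively by `[n] = {0, …, n-1}`. -/
def IsPhylo (n : ℕ) (T : RBT ℕ) : Prop := T.leaves = Multiset.range n

instance (n : ℕ) (T : RBT ℕ) : Decidable (IsPhylo n T) :=
  inferInstanceAs (Decidable (T.leaves = Multiset.range n))

/-- `p` is a probability distribution on `RB_L(n)` (viewed as a vector with
coordinates indexed by labelled trees): nonnegative, supported on `RB_L(n)`,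
with total mass one. -/
structure IsDist (n : ℕ) (p : RBT ℕ → ℝ) : Prop where
  nonneg : ∀ T, 0 ≤ p T
  supp : ∀ T, ¬ IsPhylo n T → p T = 0
  total : HasSum p 1

/-- `p` is exchangeable: relabelling the leaves by any permutation of `[n]`
does not change probabilities. -/
def Exchangeable (n : ℕ) (p : RBT ℕ → ℝ) : Prop :=
  ∀ σ : Equiv.Perm ℕ, (∀ i, i < n → σ i < n) → ∀ T : RBT ℕ, p (T.map ⇑σ) = p T

/-- `EX_n`: the exchangeable probability distributions on `RB_L(n)`. -/
def EX (n : ℕ) : Set (RBT ℕ → ℝ) := {p | IsDist n p ∧ Exchangeable n p}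

/-- `O(u)`: the labelled trees in `RB_L(n)` whose shape is (the shape of) `u`. -/
def orbitSet (n : ℕ) (u : UTree) : Set (RBT ℕ) :=
  {T | IsPhylo n T ∧ T.shape = RBT.canon u}

/-- `p_u`: the exchangeable distribution that is uniform on `O(u)` and zero
elsewhere. -/
noncomputable def pShape (n : ℕ) (u : UTree) : RBT ℕ → ℝ := fun T =>
  if IsPhylo n T ∧ T.shape = RBT.canon u then ((orbitSet n u).ncard : ℝ)⁻¹ else 0

/-- Marginalization map `π_n` from distributions on `RB_L(m)` to distributions on
`RB_L(n)`: `π_n(p)(T) = Σ_{S ∈ RB_L(m), S|_{[n]} = T} p(S)`. -/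
noncomputable def marg (m n : ℕ) (p : RBT ℕ → ℝ) : RBT ℕ → ℝ := fun T =>
  ∑' S : RBT ℕ, if IsPhylo m S ∧ RBT.restrict (Finset.range n) S = some T then p S else 0

/-- `EX_n^m = π_n(EX_m)`: the `m`-sampling consistent exchangeable distributions
on `RB_L(n)`. -/
def EXP (n m : ℕ) : Set (RBT ℕ → ℝ) := marg m n '' EX m

/-- `EX_n^∞ = ⋂_{m ≥ n} EX_n^m`: the exchangeable and (infinitely) sampling
consistent distributions on `RB_L(n)`. -/
def EXinf (n : ℕ) : Set (RBT ℕ → ℝ) := ⋂ (m : ℕ) (_ : n ≤ m), EXP n m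

/-- The shapes with `n` leaves (`RB_U(n)`), encoded as canonical forms. -/
def ShapeOn (n : ℕ) : Type := {u : UTree // RBT.canon u = u ∧ u.numLeaves = n}

/-! ## Particular shapes -/

/-- The comb (caterpillar) shape `Comb_k` with `k` leaves. -/
def combU : ℕ → UTree
  | 0 => .leaf ()
  | 1 => .leaf ()
  | n + 2 => .node (.leaf ()) (combU (n + 1))

/-- `comb(t, k)`: the comb with `k` leaves in which one of the two deepest leaves
is replaced by the tree `t`. -/
def combWith (t : UTree) : ℕ → UTree
  | 0 => t
  | 1 => t
  | n + 2 => .node (.leaf ()) (combWith t (n + 1))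

/-- The balanced shape `Bal_4` on four leaves (two cherries joined at the root). -/
def bal4U : UTree := .node (.node (.leaf ()) (.leaf ())) (.node (.leaf ()) (.leaf ()))

/-- The giraffe shape `Gir_5 = comb(Bal_4, 2)` on five leaves. -/
def gir5U : UTree := combWith bal4U 2

/-- The balanced shape `Bal_5` on five leaves (a cherry and a three-leaf comb
joined at the root). -/
def bal5U : UTree := .node (.node (.leaf ()) (.leaf ())) (combU 3)

/-- `bicomb(a, b)`: the shape obtained by joining `Comb_a` and `Comb_b` at a new
root. -/
def bicombU (a b : ℕ) : UTree := .node (combU a) (combU b)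

/-- The complete balanced binary tree with `2^k` leaves. -/
def fullBal : ℕ → UTree
  | 0 => .leaf ()
  | k + 1 => .node (fullBal k) (fullBal k)

/-- A shape is maximally balanced if at every internal vertex the numbers of
leaves of the two child subtrees differ by at most one. -/
def IsMaxBalanced : UTree → Prop
  | .leaf _ => True
  | .node l r =>
      (l.numLeaves ≤ r.numLeaves + 1 ∧ r.numLeaves ≤ l.numLeaves + 1)
        ∧ IsMaxBalanced l ∧ IsMaxBalanced r

/-! ## Counting restriction subtrees -/

/-- Label the leaves of an unlabelled tree `0, 1, 2, …` from left to right
(auxiliary function threading the next fresh label). -/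
def labelFrom : UTree → ℕ → RBT ℕ × ℕ
  | .leaf _, k => (.leaf k, k + 1)
  | .node l r, k =>
      let pl := labelFrom l k
      let pr := labelFrom r pl.2
      (.node pl.1 pr.1, pr.2)

/-- A labelled representative of an unlabelled tree, with distinct leaf labels. -/
def label (u : UTree) : RBT ℕ := (labelFrom u 0).1

/-- The number of `k`-element subsets `A` of the leaves of (a labelled
representative of) `u` such that the restriction tree `u|_A` has shape `s`. -/
def countRestr (u : UTree) (s : UTree) (k : ℕ) : ℕ :=
  (((label u).leaves.toFinset.powersetCard k).filter
    (fun A => Option.map RBT.shape (RBT.restrict A (label u)) = some (RBT.canon s))).card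

/-- `c_5(u)`: the number of `5`-element subsets of the leaves of `u` whose
restriction tree is the five-leaf comb. -/
def c5 (u : UTree) : ℕ := countRestr u (combU 5) 5

/-! ## One-hole contexts (for subtree-swapping statements) -/

/-- One-hole contexts for unlabelled rooted binary trees: a position in a tree at
which a subtree may be substituted. -/
inductive Ctx : Type
  | hole : Ctx
  | nodeL (c : Ctx) (r : UTree) : Ctx
  | nodeR (l : UTree) (c : Ctx) : Ctx

/-- Fill the hole of a context with a tree. -/
def Ctx.fill : Ctx → UTree → UTree
  | .hole, t => t
  | .nodeL c r, t => .node (c.fill t) r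
  | .nodeR l c, t => .node l (c.fill t)

/-! ## The multinomial model -/

/-- A multiset of edges of a tree shape, encoded as the shape with a
multiplicity attached to every vertex (each vertex stands for the edge directly
above it; the root vertex stands for the root edge of the extended tree). -/
inductive MTree : Type
  | leaf (k : ℕ) : MTree
  | node (k : ℕ) (l r : MTree) : MTree
  deriving DecidableEq

namespace MTree

/-- The underlying tree shape of a multiplicity assignment. -/
def strip : MTree → UTree
  | leaf _ => .leaf ()
  | node _ l r => .node (strip l) (strip r)

/-- The total number of chosen edges (with multiplicity). -/
def total : MTree → ℕ
  | leaf k => k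
  | node k l r => k + total l + total r

/-- The product of the factorials of the multiplicities (denominator of the
multinomial coefficient). -/
def factProd : MTree → ℕ
  | leaf k => k.factorial
  | node k l r => k.factorial * factProd l * factProd r

/-- The product `Π_e t_e^{m_A(e)}` of edge-parameter powers, for the parameter
vector assigning `c` to every pendant edge and `0` to every other edge. -/
noncomputable def wProd (c : ℝ) : MTree → ℝ
  | leaf k => c ^ k
  | node k l r => (0 : ℝ) ^ k * wProd c l * wProd c r

/-- Join two optional trees at a new root. -/
def mergeO : Option UTree → Option UTree → Option UTree
  | some l, some r => some (.node l r)
  | some l, none => some l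
  | none, some r => some r
  | none, none => none

/-- Attach `k` new leaves along the edge above an (optional) already-built tree. -/
def attach : ℕ → Option UTree → Option UTree
  | 0, s => s
  | k + 1, s =>
      match attach k s with
      | none => some (.leaf ())
      | some t => some (.node (.leaf ()) t)

/-- `T_A`: attach one new leaf to an edge for each of its occurrences in the
multiset `A`, and restrict the resulting tree to the new leaves. -/
def build : MTree → Option UTree
  | leaf k => attach k none
  | node k l r => attach k (mergeO (build l) (build r))

end MTree

/-- The probability, under the multinomial model on the shape `T` (with edge
parameter `c` on every pendant edge and `0` on every other edge), that a random
multiset `A` of `n` edges yields a tree `T_A` of shape `s`: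
`d(s) = Σ_{A, T_A = s} C(n; m_A) Π_e t_e^{m_A(e)}`. -/
noncomputable def multinomDist (T : UTree) (c : ℝ) (n : ℕ) (s : UTree) : ℝ :=
  ∑' a : MTree,
    if a.strip = T ∧ a.total = n ∧ Option.map RBT.canon a.build = some (RBT.canon s) then
      ((n.factorial : ℝ) / (a.factProd : ℝ)) * MTree.wProd c a
    else 0


namespace PF

def phi4 (a b : ℕ) : ℕ := a * Nat.choose b 3 + b * Nat.choose a 3

lemma phi4_comm (a b : ℕ) : phi4 a b = phi4 b a := by unfold phi4; ring

lemma zc2 (x : ℕ) : (2 * Nat.choose x 2 : ℤ) = x * (x - 1) := by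
  induction x with
  | zero => simp
  | succ y ih =>
    simp only [Nat.choose_succ_succ y 1, Nat.choose_one_right]
    push_cast
    push_cast at ih
    linear_combination ih

lemma zc3 (x : ℕ) : (6 * Nat.choose x 3 : ℤ) = x * (x - 1) * (x - 2) := by
  induction x with
  | zero => simp
  | succ y ih =>
    simp only [Nat.choose_succ_succ y 2]
    push_cast
    push_cast at ih
    have h2 := zc2 y
    push_cast at h2
    linear_combination ih + 3 * h2

def M4 (n : ℕ) : ℕ :=
  if h : n < 2 then 0
  else M4 (n / 2) + M4 (n - n / 2) + phi4 (n / 2) (n - n / 2)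
decreasing_by all_goals omega

def M5 (n : ℕ) : ℕ :=
  if h : n < 2 then 0
  else M5 (n / 2) + M5 (n - n / 2) + (n / 2) * M4 (n - n / 2) + (n - n / 2) * M4 (n / 2)
decreasing_by all_goals omega

def DM4 (n : ℕ) : ℕ :=
  if h : n < 2 then 0
  else if n % 2 = 0 then
    DM4 (n / 2) + (n / 2) * Nat.choose (n / 2) 2 + Nat.choose (n / 2) 3
  else
    DM4 (n / 2) + (n / 2 + 1) * Nat.choose (n / 2) 2 + Nat.choose (n / 2 + 1) 3
decreasing_by all_goals omega

def E4 (n : ℕ) : ℕ :=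
  if n % 2 = 0 then 2 * Nat.choose (n / 2) 2
  else E4 (n / 2) + (n / 2) * (n / 2 + 1)
decreasing_by all_goals omega

def DM5 (n : ℕ) : ℕ :=
  if h : n < 2 then 0
  else if n % 2 = 0 then
    DM5 (n / 2) + (n / 2) * DM4 (n / 2) + M4 (n / 2)
  else
    DM5 (n / 2) + (n / 2 + 1) * DM4 (n / 2) + M4 (n / 2 + 1)
decreasing_by all_goals omega

def E5 (n : ℕ) : ℕ :=
  if h : n = 0 then 0
  else if n % 2 = 0 then 2 * DM4 (n / 2)
  else E5 (n / 2) + (n / 2 + 1) * E4 (n / 2)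
decreasing_by all_goals omega

lemma M4_small {n : ℕ} (h : n < 2) : M4 n = 0 := by rw [M4]; simp [h]

lemma M4_rec {n : ℕ} (h : 2 ≤ n) : M4 n = M4 (n / 2) + M4 (n - n / 2) + phi4 (n / 2) (n - n / 2) := by
  rw [M4]; simp [Nat.not_lt.mpr h]

lemma M5_small {n : ℕ} (h : n < 2) : M5 n = 0 := by rw [M5]; simp [h]

lemma M5_rec {n : ℕ} (h : 2 ≤ n) : M5 n = M5 (n / 2) + M5 (n - n / 2) + (n / 2) * M4 (n - n / 2) + (n - n / 2) * M4 (n / 2) := by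
  rw [M5]; simp [Nat.not_lt.mpr h]

lemma DM4_small {n : ℕ} (h : n < 2) : DM4 n = 0 := by rw [DM4]; simp [h]

lemma DM4_even {m : ℕ} (h : 1 ≤ m) : DM4 (2*m) = DM4 m + m * Nat.choose m 2 + Nat.choose m 3 := by
  rw [DM4]
  have h1 : ¬ (2*m < 2) := by omega
  have h2 : (2*m) % 2 = 0 := by omega
  have h3 : (2*m) / 2 = m := by omega
  simp [h1, h2, h3]

lemma DM4_odd {m : ℕ} (h : 1 ≤ m) : DM4 (2*m+1) = DM4 m + (m+1) * Nat.choose m 2 + Nat.choose (m+1) 3 := by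
  rw [DM4]
  have h1 : ¬ (2*m+1 < 2) := by omega
  have h2 : ¬ ((2*m+1) % 2 = 0) := by omega
  have h3 : (2*m+1) / 2 = m := by omega
  simp [h1, h2, h3]

lemma E4_even (m : ℕ) : E4 (2*m) = 2 * Nat.choose m 2 := by
  rw [E4]
  have h2 : (2*m) % 2 = 0 := by omega
  have h3 : (2*m) / 2 = m := by omega
  simp [h2, h3]

lemma E4_odd (m : ℕ) : E4 (2*m+1) = E4 m + m * (m+1) := by
  rw [E4]
  have h2 : ¬ ((2*m+1) % 2 = 0) := by omega
  have h3 : (2*m+1) / 2 = m := by omega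
  simp [h2, h3]

lemma DM5_small {n : ℕ} (h : n < 2) : DM5 n = 0 := by rw [DM5]; simp [h]

lemma DM5_even {m : ℕ} (h : 1 ≤ m) : DM5 (2*m) = DM5 m + m * DM4 m + M4 m := by
  rw [DM5]
  have h1 : ¬ (2*m < 2) := by omega
  have h2 : (2*m) % 2 = 0 := by omega
  have h3 : (2*m) / 2 = m := by omega
  simp [h1, h2, h3]

lemma DM5_odd {m : ℕ} (h : 1 ≤ m) : DM5 (2*m+1) = DM5 m + (m+1) * DM4 m + M4 (m+1) := by
  rw [DM5]
  have h1 : ¬ (2*m+1 < 2) := by omega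
  have h2 : ¬ ((2*m+1) % 2 = 0) := by omega
  have h3 : (2*m+1) / 2 = m := by omega
  simp [h1, h2, h3]

lemma E5_even {m : ℕ} (h : 1 ≤ m) : E5 (2*m) = 2 * DM4 m := by
  rw [E5]
  have h1 : ¬ (2*m = 0) := by omega
  have h2 : (2*m) % 2 = 0 := by omega
  have h3 : (2*m) / 2 = m := by omega
  simp [h1, h2, h3]

lemma E5_odd (m : ℕ) : E5 (2*m+1) = E5 m + (m+1) * E4 m := by
  rw [E5]
  have h1 : ¬ (2*m+1 = 0) := by omega
  have h2 : ¬ ((2*m+1) % 2 = 0) := by omega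
  have h3 : (2*m+1) / 2 = m := by omega
  simp [h1, h2, h3]



lemma phiA (m : ℕ) : 6 * phi4 m (m+1) = 6 * phi4 m m + 6*(m * Nat.choose m 2) + 6 * Nat.choose m 3 := by
  simp only [phi4]
  have h3 := zc3 (m+1); have h3' := zc3 m; have h2 := zc2 m
  zify
  push_cast at h3 h3' h2 ⊢
  linear_combination (m:ℤ) * h3 - (m:ℤ) * h3' - 3*(m:ℤ) * h2

lemma phiB (m : ℕ) : 6 * phi4 (m+1) (m+1) = 6 * phi4 m (m+1) + 6*((m+1) * Nat.choose m 2) + 6 * Nat.choose (m+1) 3 := by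
  simp only [phi4]
  have h3 := zc3 (m+1); have h3' := zc3 m; have h2 := zc2 m
  zify
  push_cast at h3 h3' h2 ⊢
  linear_combination ((m:ℤ)+1) * h3 - ((m:ℤ)+1) * h3' - 3*((m:ℤ)+1) * h2

lemma M4_succ : ∀ n, M4 (n+1) = M4 n + DM4 n := by
  intro n
  induction n using Nat.strong_induction_on with
  | _ n ih =>
    rcases Nat.lt_or_ge n 2 with h|h
    · interval_cases n
      · rw [M4_small (by norm_num), M4_small (by norm_num), DM4_small (by norm_num)]
      · rw [M4_rec (by norm_num)]
        norm_num [M4_small, DM4_small, phi4]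
        <;> decide
    · obtain ⟨m, rfl | rfl⟩ := Nat.even_or_odd' n
      · have hm : 1 ≤ m := by omega
        have d1 : (2*m+1)/2 = m := by omega
        have d2 : 2*m+1 - m = m+1 := by omega
        have d3 : (2*m)/2 = m := by omega
        have d4 : 2*m - m = m := by omega
        have r1 : M4 (2*m+1) = M4 m + M4 (m+1) + phi4 m (m+1) := by
          rw [M4_rec (by omega), d1, d2]
        have r2 : M4 (2*m) = M4 m + M4 m + phi4 m m := by
          rw [M4_rec (by omega), d3, d4]
        rw [r1, r2, DM4_even hm]
        have hA := phiA m
        have hI := ih m (by omega)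
        linarith
      · have hm : 1 ≤ m := by omega
        have d1 : (2*m+1+1)/2 = m+1 := by omega
        have d2 : 2*m+1+1 - (m+1) = m+1 := by omega
        have d3 : (2*m+1)/2 = m := by omega
        have d4 : 2*m+1 - m = m+1 := by omega
        have r1 : M4 (2*m+1+1) = M4 (m+1) + M4 (m+1) + phi4 (m+1) (m+1) := by
          rw [M4_rec (by omega), d1, d2]
        have r2 : M4 (2*m+1) = M4 m + M4 (m+1) + phi4 m (m+1) := by
          rw [M4_rec (by omega), d3, d4]
        rw [r1, r2, DM4_odd hm]
        have hB := phiB m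
        have hI := ih m (by omega)
        linarith

lemma DM4_succ : ∀ n, DM4 (n+1) = DM4 n + E4 n := by
  intro n
  induction n using Nat.strong_induction_on with
  | _ n ih =>
    rcases Nat.lt_or_ge n 2 with h|h
    · interval_cases n
      · rw [DM4_small (by norm_num), DM4_small (by norm_num)]
        have : E4 0 = 2 * Nat.choose 0 2 := by
          have := E4_even 0; simpa using this
        simp [this]
      · have e1 : E4 1 = E4 0 + 0 * (0+1) := by
          have := E4_odd 0; simpa using this
        have e0 : E4 0 = 2 * Nat.choose 0 2 := by
          have := E4_even 0; simpa using this
        have dm2 : DM4 2 = DM4 1 + 1 * Nat.choose 1 2 + Nat.choose 1 3 := by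
          have := DM4_even (m := 1) (by norm_num); simpa using this
        rw [dm2, DM4_small (by norm_num), e1, e0]
        simp [Nat.choose]
    · obtain ⟨m, rfl | rfl⟩ := Nat.even_or_odd' n
      · have hm : 1 ≤ m := by omega
        rw [DM4_odd hm, DM4_even hm, E4_even m]
        have p : Nat.choose (m+1) 3 = Nat.choose m 2 + Nat.choose m 3 := Nat.choose_succ_succ m 2
        -- goal: DM4 m + (m+1)*C(m,2) + C(m+1,3) = DM4 m + m*C(m,2) + C(m,3) + 2*C(m,2)
        rw [p]; ring
      · have hm : 1 ≤ m := by omega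
        have r1 : DM4 (2*m+1+1) = DM4 (m+1) + (m+1) * Nat.choose (m+1) 2 + Nat.choose (m+1) 3 := by
          have : 2*m+1+1 = 2*(m+1) := by omega
          rw [this, DM4_even (by omega)]
        rw [r1, DM4_odd hm, E4_odd m, ih m (by omega)]
        have p : Nat.choose (m+1) 2 = Nat.choose m 1 + Nat.choose m 2 := Nat.choose_succ_succ m 1
        rw [p, Nat.choose_one_right]; ring

lemma M5_succ : ∀ n, M5 (n+1) = M5 n + DM5 n := by
  intro n
  induction n using Nat.strong_induction_on with
  | _ n ih =>
    rcases Nat.lt_or_ge n 2 with h|h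
    · interval_cases n
      · rw [M5_small (by norm_num), M5_small (by norm_num), DM5_small (by norm_num)]
      · rw [M5_rec (by norm_num)]
        norm_num [M5_small, DM5_small, M4_small]
    · obtain ⟨m, rfl | rfl⟩ := Nat.even_or_odd' n
      · have hm : 1 ≤ m := by omega
        have d1 : (2*m+1)/2 = m := by omega
        have d2 : 2*m+1 - m = m+1 := by omega
        have d3 : (2*m)/2 = m := by omega
        have d4 : 2*m - m = m := by omega
        have r1 : M5 (2*m+1) = M5 m + M5 (m+1) + m * M4 (m+1) + (m+1) * M4 m := by
          rw [M5_rec (by omega), d1, d2]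
        have r2 : M5 (2*m) = M5 m + M5 m + m * M4 m + m * M4 m := by
          rw [M5_rec (by omega), d3, d4]
        rw [r1, r2, DM5_even hm]
        have h1 := ih m (by omega)
        have h2 := M4_succ m
        rw [h1, h2]; ring
      · have hm : 1 ≤ m := by omega
        have d1 : (2*m+1+1)/2 = m+1 := by omega
        have d2 : 2*m+1+1 - (m+1) = m+1 := by omega
        have d3 : (2*m+1)/2 = m := by omega
        have d4 : 2*m+1 - m = m+1 := by omega
        have r1 : M5 (2*m+1+1) = M5 (m+1) + M5 (m+1) + (m+1) * M4 (m+1) + (m+1) * M4 (m+1) := by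
          rw [M5_rec (by omega), d1, d2]
        have r2 : M5 (2*m+1) = M5 m + M5 (m+1) + m * M4 (m+1) + (m+1) * M4 m := by
          rw [M5_rec (by omega), d3, d4]
        rw [r1, r2, DM5_odd hm]
        have h1 := ih m (by omega)
        rw [h1, M4_succ m]; ring

lemma DM5_succ : ∀ n, DM5 (n+1) = DM5 n + E5 n := by
  intro n
  induction n using Nat.strong_induction_on with
  | _ n ih =>
    rcases Nat.lt_or_ge n 2 with h|h
    · interval_cases n
      · rw [DM5_small (by norm_num), DM5_small (by norm_num)]
        simp [E5]
      · have r1 : DM5 2 = DM5 1 + 1 * DM4 1 + M4 1 := DM5_even (m := 1) (by norm_num)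
        have r2 : E5 1 = E5 0 + 1 * E4 0 := E5_odd 0
        have r3 : E4 0 = 2 * Nat.choose 0 2 := by have := E4_even 0; simpa using this
        rw [r1, r2, r3, DM5_small (by norm_num), DM4_small (by norm_num), M4_small (by norm_num)]
        simp [E5, Nat.choose]
    · obtain ⟨m, rfl | rfl⟩ := Nat.even_or_odd' n
      · have hm : 1 ≤ m := by omega
        rw [DM5_odd hm, DM5_even hm, E5_even hm]
        have h2 := M4_succ m
        rw [h2]; ring
      · have hm : 1 ≤ m := by omega
        have r1 : DM5 (2*m+1+1) = DM5 (m+1) + (m+1) * DM4 (m+1) + M4 (m+1) := by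
          have : 2*m+1+1 = 2*(m+1) := by omega
          rw [this, DM5_even (by omega)]
        rw [r1, DM5_odd hm, E5_odd m, ih m (by omega), DM4_succ m]
        ring


lemma E4v0 : E4 0 = 0 := by have h := E4_even 0; simpa using h
lemma E4v1 : E4 1 = 0 := by rw [show (1:ℕ) = 2*0+1 by norm_num, E4_odd, E4v0]
lemma E4v2 : E4 2 = 0 := by rw [show (2:ℕ) = 2*1 by norm_num, E4_even]; decide
lemma E4v3 : E4 3 = 2 := by rw [show (3:ℕ) = 2*1+1 by norm_num, E4_odd, E4v1]
lemma E4v4 : E4 4 = 2 := by rw [show (4:ℕ) = 2*2 by norm_num, E4_even]; decide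
lemma E4v5 : E4 5 = 6 := by rw [show (5:ℕ) = 2*2+1 by norm_num, E4_odd, E4v2]
lemma E4v6 : E4 6 = 6 := by rw [show (6:ℕ) = 2*3 by norm_num, E4_even]; decide
lemma E4v7 : E4 7 = 14 := by rw [show (7:ℕ) = 2*3+1 by norm_num, E4_odd, E4v3]
lemma E4v8 : E4 8 = 12 := by rw [show (8:ℕ) = 2*4 by norm_num, E4_even]; decide
lemma E4v9 : E4 9 = 22 := by rw [show (9:ℕ) = 2*4+1 by norm_num, E4_odd, E4v4]
lemma E4v10 : E4 10 = 20 := by rw [show (10:ℕ) = 2*5 by norm_num, E4_even]; decide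
lemma E4v11 : E4 11 = 36 := by rw [show (11:ℕ) = 2*5+1 by norm_num, E4_odd, E4v5]
lemma E4v12 : E4 12 = 30 := by rw [show (12:ℕ) = 2*6 by norm_num, E4_even]; decide
lemma E4v13 : E4 13 = 48 := by rw [show (13:ℕ) = 2*6+1 by norm_num, E4_odd, E4v6]
lemma E4v14 : E4 14 = 42 := by rw [show (14:ℕ) = 2*7 by norm_num, E4_even]; decide
lemma E4v15 : E4 15 = 70 := by rw [show (15:ℕ) = 2*7+1 by norm_num, E4_odd, E4v7]
lemma E4v16 : E4 16 = 56 := by rw [show (16:ℕ) = 2*8 by norm_num, E4_even]; decide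
lemma E4v17 : E4 17 = 84 := by rw [show (17:ℕ) = 2*8+1 by norm_num, E4_odd, E4v8]
lemma E4v18 : E4 18 = 72 := by rw [show (18:ℕ) = 2*9 by norm_num, E4_even]; decide
lemma E4v19 : E4 19 = 112 := by rw [show (19:ℕ) = 2*9+1 by norm_num, E4_odd, E4v9]
lemma E4v20 : E4 20 = 90 := by rw [show (20:ℕ) = 2*10 by norm_num, E4_even]; decide
lemma E4v21 : E4 21 = 130 := by rw [show (21:ℕ) = 2*10+1 by norm_num, E4_odd, E4v10]
lemma E4v22 : E4 22 = 110 := by rw [show (22:ℕ) = 2*11 by norm_num, E4_even]; decide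
lemma E4v23 : E4 23 = 168 := by rw [show (23:ℕ) = 2*11+1 by norm_num, E4_odd, E4v11]
lemma E4v24 : E4 24 = 132 := by rw [show (24:ℕ) = 2*12 by norm_num, E4_even]; decide
lemma E4v25 : E4 25 = 186 := by rw [show (25:ℕ) = 2*12+1 by norm_num, E4_odd, E4v12]
lemma DM4v0 : DM4 0 = 0 := DM4_small (by norm_num)
lemma DM4v1 : DM4 1 = 0 := by rw [show (1:ℕ) = 0+1 by norm_num, DM4_succ, DM4v0, E4v0]
lemma DM4v2 : DM4 2 = 0 := by rw [show (2:ℕ) = 1+1 by norm_num, DM4_succ, DM4v1, E4v1]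
lemma DM4v3 : DM4 3 = 0 := by rw [show (3:ℕ) = 2+1 by norm_num, DM4_succ, DM4v2, E4v2]
lemma DM4v4 : DM4 4 = 2 := by rw [show (4:ℕ) = 3+1 by norm_num, DM4_succ, DM4v3, E4v3]
lemma DM4v5 : DM4 5 = 4 := by rw [show (5:ℕ) = 4+1 by norm_num, DM4_succ, DM4v4, E4v4]
lemma DM4v6 : DM4 6 = 10 := by rw [show (6:ℕ) = 5+1 by norm_num, DM4_succ, DM4v5, E4v5]
lemma DM4v7 : DM4 7 = 16 := by rw [show (7:ℕ) = 6+1 by norm_num, DM4_succ, DM4v6, E4v6]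
lemma DM4v8 : DM4 8 = 30 := by rw [show (8:ℕ) = 7+1 by norm_num, DM4_succ, DM4v7, E4v7]
lemma DM4v9 : DM4 9 = 42 := by rw [show (9:ℕ) = 8+1 by norm_num, DM4_succ, DM4v8, E4v8]
lemma DM4v10 : DM4 10 = 64 := by rw [show (10:ℕ) = 9+1 by norm_num, DM4_succ, DM4v9, E4v9]
lemma DM4v11 : DM4 11 = 84 := by rw [show (11:ℕ) = 10+1 by norm_num, DM4_succ, DM4v10, E4v10]
lemma DM4v12 : DM4 12 = 120 := by rw [show (12:ℕ) = 11+1 by norm_num, DM4_succ, DM4v11, E4v11]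
lemma DM4v13 : DM4 13 = 150 := by rw [show (13:ℕ) = 12+1 by norm_num, DM4_succ, DM4v12, E4v12]
lemma DM4v14 : DM4 14 = 198 := by rw [show (14:ℕ) = 13+1 by norm_num, DM4_succ, DM4v13, E4v13]
lemma DM4v15 : DM4 15 = 240 := by rw [show (15:ℕ) = 14+1 by norm_num, DM4_succ, DM4v14, E4v14]
lemma DM4v16 : DM4 16 = 310 := by rw [show (16:ℕ) = 15+1 by norm_num, DM4_succ, DM4v15, E4v15]
lemma DM4v17 : DM4 17 = 366 := by rw [show (17:ℕ) = 16+1 by norm_num, DM4_succ, DM4v16, E4v16]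
lemma DM4v18 : DM4 18 = 450 := by rw [show (18:ℕ) = 17+1 by norm_num, DM4_succ, DM4v17, E4v17]
lemma DM4v19 : DM4 19 = 522 := by rw [show (19:ℕ) = 18+1 by norm_num, DM4_succ, DM4v18, E4v18]
lemma DM4v20 : DM4 20 = 634 := by rw [show (20:ℕ) = 19+1 by norm_num, DM4_succ, DM4v19, E4v19]
lemma DM4v21 : DM4 21 = 724 := by rw [show (21:ℕ) = 20+1 by norm_num, DM4_succ, DM4v20, E4v20]
lemma DM4v22 : DM4 22 = 854 := by rw [show (22:ℕ) = 21+1 by norm_num, DM4_succ, DM4v21, E4v21]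
lemma DM4v23 : DM4 23 = 964 := by rw [show (23:ℕ) = 22+1 by norm_num, DM4_succ, DM4v22, E4v22]
lemma DM4v24 : DM4 24 = 1132 := by rw [show (24:ℕ) = 23+1 by norm_num, DM4_succ, DM4v23, E4v23]
lemma DM4v25 : DM4 25 = 1264 := by rw [show (25:ℕ) = 24+1 by norm_num, DM4_succ, DM4v24, E4v24]
lemma E5v0 : E5 0 = 0 := by rw [E5]; simp
lemma E5v1 : E5 1 = 0 := by rw [show (1:ℕ) = 2*0+1 by norm_num, E5_odd, E5v0, E4v0]
lemma E5v2 : E5 2 = 0 := by rw [show (2:ℕ) = 2*1 by norm_num, E5_even (by norm_num), DM4v1]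
lemma E5v3 : E5 3 = 0 := by rw [show (3:ℕ) = 2*1+1 by norm_num, E5_odd, E5v1, E4v1]
lemma E5v4 : E5 4 = 0 := by rw [show (4:ℕ) = 2*2 by norm_num, E5_even (by norm_num), DM4v2]
lemma E5v5 : E5 5 = 0 := by rw [show (5:ℕ) = 2*2+1 by norm_num, E5_odd, E5v2, E4v2]
lemma E5v6 : E5 6 = 0 := by rw [show (6:ℕ) = 2*3 by norm_num, E5_even (by norm_num), DM4v3]
lemma E5v7 : E5 7 = 8 := by rw [show (7:ℕ) = 2*3+1 by norm_num, E5_odd, E5v3, E4v3]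
lemma E5v8 : E5 8 = 4 := by rw [show (8:ℕ) = 2*4 by norm_num, E5_even (by norm_num), DM4v4]
lemma E5v9 : E5 9 = 10 := by rw [show (9:ℕ) = 2*4+1 by norm_num, E5_odd, E5v4, E4v4]
lemma E5v10 : E5 10 = 8 := by rw [show (10:ℕ) = 2*5 by norm_num, E5_even (by norm_num), DM4v5]
lemma E5v11 : E5 11 = 36 := by rw [show (11:ℕ) = 2*5+1 by norm_num, E5_odd, E5v5, E4v5]
lemma E5v12 : E5 12 = 20 := by rw [show (12:ℕ) = 2*6 by norm_num, E5_even (by norm_num), DM4v6]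
lemma E5v13 : E5 13 = 42 := by rw [show (13:ℕ) = 2*6+1 by norm_num, E5_odd, E5v6, E4v6]
lemma E5v14 : E5 14 = 32 := by rw [show (14:ℕ) = 2*7 by norm_num, E5_even (by norm_num), DM4v7]
lemma E5v15 : E5 15 = 120 := by rw [show (15:ℕ) = 2*7+1 by norm_num, E5_odd, E5v7, E4v7]
lemma E5v16 : E5 16 = 60 := by rw [show (16:ℕ) = 2*8 by norm_num, E5_even (by norm_num), DM4v8]
lemma E5v17 : E5 17 = 112 := by rw [show (17:ℕ) = 2*8+1 by norm_num, E5_odd, E5v8, E4v8]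
lemma E5v18 : E5 18 = 84 := by rw [show (18:ℕ) = 2*9 by norm_num, E5_even (by norm_num), DM4v9]
lemma E5v19 : E5 19 = 230 := by rw [show (19:ℕ) = 2*9+1 by norm_num, E5_odd, E5v9, E4v9]
lemma E5v20 : E5 20 = 128 := by rw [show (20:ℕ) = 2*10 by norm_num, E5_even (by norm_num), DM4v10]
lemma E5v21 : E5 21 = 228 := by rw [show (21:ℕ) = 2*10+1 by norm_num, E5_odd, E5v10, E4v10]
lemma E5v22 : E5 22 = 168 := by rw [show (22:ℕ) = 2*11 by norm_num, E5_even (by norm_num), DM4v11]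
lemma E5v23 : E5 23 = 468 := by rw [show (23:ℕ) = 2*11+1 by norm_num, E5_odd, E5v11, E4v11]
lemma E5v24 : E5 24 = 240 := by rw [show (24:ℕ) = 2*12 by norm_num, E5_even (by norm_num), DM4v12]
lemma E5v25 : E5 25 = 410 := by rw [show (25:ℕ) = 2*12+1 by norm_num, E5_odd, E5v12, E4v12]
lemma DM5v0 : DM5 0 = 0 := DM5_small (by norm_num)
lemma DM5v1 : DM5 1 = 0 := by rw [show (1:ℕ) = 0+1 by norm_num, DM5_succ, DM5v0, E5v0]
lemma DM5v2 : DM5 2 = 0 := by rw [show (2:ℕ) = 1+1 by norm_num, DM5_succ, DM5v1, E5v1]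
lemma DM5v3 : DM5 3 = 0 := by rw [show (3:ℕ) = 2+1 by norm_num, DM5_succ, DM5v2, E5v2]
lemma DM5v4 : DM5 4 = 0 := by rw [show (4:ℕ) = 3+1 by norm_num, DM5_succ, DM5v3, E5v3]
lemma DM5v5 : DM5 5 = 0 := by rw [show (5:ℕ) = 4+1 by norm_num, DM5_succ, DM5v4, E5v4]
lemma DM5v6 : DM5 6 = 0 := by rw [show (6:ℕ) = 5+1 by norm_num, DM5_succ, DM5v5, E5v5]
lemma DM5v7 : DM5 7 = 0 := by rw [show (7:ℕ) = 6+1 by norm_num, DM5_succ, DM5v6, E5v6]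
lemma DM5v8 : DM5 8 = 8 := by rw [show (8:ℕ) = 7+1 by norm_num, DM5_succ, DM5v7, E5v7]
lemma M4v0 : M4 0 = 0 := M4_small (by norm_num)
lemma M4v1 : M4 1 = 0 := by rw [show (1:ℕ) = 0+1 by norm_num, M4_succ, M4v0, DM4v0]
lemma M4v2 : M4 2 = 0 := by rw [show (2:ℕ) = 1+1 by norm_num, M4_succ, M4v1, DM4v1]
lemma M4v3 : M4 3 = 0 := by rw [show (3:ℕ) = 2+1 by norm_num, M4_succ, M4v2, DM4v2]
lemma M4v4 : M4 4 = 0 := by rw [show (4:ℕ) = 3+1 by norm_num, M4_succ, M4v3, DM4v3]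
lemma M4v5 : M4 5 = 2 := by rw [show (5:ℕ) = 4+1 by norm_num, M4_succ, M4v4, DM4v4]
lemma M4v6 : M4 6 = 6 := by rw [show (6:ℕ) = 5+1 by norm_num, M4_succ, M4v5, DM4v5]
lemma M4v7 : M4 7 = 16 := by rw [show (7:ℕ) = 6+1 by norm_num, M4_succ, M4v6, DM4v6]
lemma M4v8 : M4 8 = 32 := by rw [show (8:ℕ) = 7+1 by norm_num, M4_succ, M4v7, DM4v7]
lemma M5v0 : M5 0 = 0 := M5_small (by norm_num)
lemma M5v1 : M5 1 = 0 := by rw [show (1:ℕ) = 0+1 by norm_num, M5_succ, M5v0, DM5v0]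
lemma M5v2 : M5 2 = 0 := by rw [show (2:ℕ) = 1+1 by norm_num, M5_succ, M5v1, DM5v1]
lemma M5v3 : M5 3 = 0 := by rw [show (3:ℕ) = 2+1 by norm_num, M5_succ, M5v2, DM5v2]
lemma M5v4 : M5 4 = 0 := by rw [show (4:ℕ) = 3+1 by norm_num, M5_succ, M5v3, DM5v3]
lemma M5v5 : M5 5 = 0 := by rw [show (5:ℕ) = 4+1 by norm_num, M5_succ, M5v4, DM5v4]
lemma M5v6 : M5 6 = 0 := by rw [show (6:ℕ) = 5+1 by norm_num, M5_succ, M5v5, DM5v5]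
lemma M5v7 : M5 7 = 0 := by rw [show (7:ℕ) = 6+1 by norm_num, M5_succ, M5v6, DM5v6]
lemma M5v8 : M5 8 = 0 := by rw [show (8:ℕ) = 7+1 by norm_num, M5_succ, M5v7, DM5v7]



lemma natCast_nonneg' (x : ℕ) : (0:ℤ) ≤ (x:ℤ) := Int.natCast_nonneg x

lemma L4E : ∀ k, k^2 ≤ 4 * E4 k + 2*k := by
  intro k
  induction k using Nat.strong_induction_on with
  | _ k ih =>
    obtain ⟨m, rfl | rfl⟩ := Nat.even_or_odd' k
    · rw [E4_even]
      have h2 := zc2 m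
      zify
      nlinarith [h2]
    · rw [E4_odd]
      have hi := ih m (by omega)
      zify at hi ⊢
      nlinarith [hi]

lemma U4 : ∀ k, 9 * DM4 k ≤ k^3 := by
  intro k
  induction k using Nat.strong_induction_on with
  | _ k ih =>
    rcases Nat.lt_or_ge k 2 with h|h
    · rw [DM4_small h]; simp
    · obtain ⟨m, rfl | rfl⟩ := Nat.even_or_odd' k
      · have hm : 1 ≤ m := by omega
        rw [DM4_even hm]
        have hi := ih m (by omega)
        have h2 := zc2 m
        have h3 := zc3 m
        have hm' : (1:ℤ) ≤ (m:ℤ) := by exact_mod_cast hm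
        zify at hi ⊢
        have h2m : (m:ℤ) * (2*(Nat.choose m 2 : ℤ)) = (m:ℤ)*((m:ℤ)*((m:ℤ)-1)) := by rw [h2]
        nlinarith [hi, h2m, h3, hm', sq_nonneg ((m:ℤ)-1), sq_nonneg (m:ℤ)]
      · have hm : 1 ≤ m := by omega
        rw [DM4_odd hm]
        have hi := ih m (by omega)
        have h2 := zc2 m
        have h3 := zc3 (m+1)
        have hm' : (1:ℤ) ≤ (m:ℤ) := by exact_mod_cast hm
        zify at hi ⊢
        have h2m : ((m:ℤ)+1) * (2*(Nat.choose m 2 : ℤ)) = ((m:ℤ)+1)*((m:ℤ)*((m:ℤ)-1)) := by rw [h2]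
        push_cast at h3
        nlinarith [hi, h2m, h3, hm', sq_nonneg ((m:ℤ)-1), sq_nonneg (m:ℤ)]

lemma L4D : ∀ k, k^3 ≤ 11 * DM4 k + 4*k^2 := by
  intro k
  induction k using Nat.strong_induction_on with
  | _ k ih =>
    rcases Nat.lt_or_ge k 2 with h|h
    · interval_cases k
      · simp
      · rw [DM4_small (by norm_num)]; norm_num
    · obtain ⟨m, rfl | rfl⟩ := Nat.even_or_odd' k
      · have hm : 1 ≤ m := by omega
        rw [DM4_even hm]
        have hi := ih m (by omega)
        have h2 := zc2 m
        have h3 := zc3 m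
        have hm' : (1:ℤ) ≤ (m:ℤ) := by exact_mod_cast hm
        zify at hi ⊢
        have h2m : (m:ℤ) * (2*(Nat.choose m 2 : ℤ)) = (m:ℤ)*((m:ℤ)*((m:ℤ)-1)) := by rw [h2]
        nlinarith [hi, h2m, h3, hm', sq_nonneg ((m:ℤ)-1)]
      · have hm : 1 ≤ m := by omega
        rw [DM4_odd hm]
        have hi := ih m (by omega)
        have h2 := zc2 m
        have h3 := zc3 (m+1)
        have hm' : (1:ℤ) ≤ (m:ℤ) := by exact_mod_cast hm
        zify at hi ⊢
        have h2m : ((m:ℤ)+1) * (2*(Nat.choose m 2 : ℤ)) = ((m:ℤ)+1)*((m:ℤ)*((m:ℤ)-1)) := by rw [h2]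
        push_cast at h3
        nlinarith [hi, h2m, h3, hm', sq_nonneg ((m:ℤ)-1)]

lemma L5E : ∀ k, k^3 ≤ 44 * E5 k + 8*k^2 := by
  intro k
  rcases Nat.eq_zero_or_pos k with rfl|hk
  · simp
  obtain ⟨m, rfl | rfl⟩ := Nat.even_or_odd' k
  · have hm : 1 ≤ m := by omega
    rw [E5_even hm]
    have h := L4D m
    zify at h ⊢
    nlinarith [h]
  · rw [E5_odd]
    have h := L4E m
    have hm0 : (0:ℤ) ≤ (m:ℤ) := natCast_nonneg' m
    have hE5 : (0:ℤ) ≤ (E5 m : ℤ) := natCast_nonneg' _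
    zify at h ⊢
    nlinarith [h, hm0, hE5, mul_le_mul_of_nonneg_left h (by linarith : (0:ℤ) ≤ (m:ℤ)+1)]



lemma key5_small : ∀ a c, 2 ≤ a → a ≤ 13 → a ≤ c → c ≤ 2*a - 1 →
    DM4 a + DM4 c ≤ E5 c + a * E4 c := by
  intro a c ha ha13 hac hc
  interval_cases a <;> interval_cases c <;>
    simp [DM4v0, DM4v1, DM4v2, DM4v3, DM4v4, DM4v5, DM4v6, DM4v7, DM4v8, DM4v9, DM4v10, DM4v11, DM4v12, DM4v13, DM4v14, DM4v15, DM4v16, DM4v17, DM4v18, DM4v19, DM4v20, DM4v21, DM4v22, DM4v23, DM4v24, DM4v25, E4v0, E4v1, E4v2, E4v3, E4v4, E4v5, E4v6, E4v7, E4v8, E4v9, E4v10, E4v11, E4v12, E4v13, E4v14, E4v15, E4v16, E4v17, E4v18, E4v19, E4v20, E4v21, E4v22, E4v23, E4v24, E4v25, E5v0, E5v1, E5v2, E5v3, E5v4, E5v5, E5v6, E5v7, E5v8, E5v9, E5v10, E5v11, E5v12, E5v13, E5v14, E5v15, E5v16, E5v17, E5v18, E5v19, E5v20, E5v21, E5v22,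 E5v23, E5v24, E5v25]

lemma key5_large : ∀ a c, 14 ≤ a → a ≤ c → c ≤ 2*a - 1 →
    DM4 a + DM4 c ≤ E5 c + a * E4 c := by
  intro a c ha hac hc
  have u4a := U4 a
  have u4c := U4 c
  have l5 := L5E c
  have l4 := L4E c
  have ha' : (14:ℤ) ≤ (a:ℤ) := by exact_mod_cast ha
  have hac' : (a:ℤ) ≤ (c:ℤ) := by exact_mod_cast hac
  have hc' : (c:ℤ) ≤ 2*(a:ℤ) - 1 := by
    have : c ≤ 2*a - 1 := hc
    omega
  zify at u4a u4c l5 l4 ⊢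
  nlinarith [u4a, u4c, l5, l4, mul_le_mul_of_nonneg_left l4 (by linarith : (0:ℤ) ≤ (a:ℤ)),
    mul_nonneg (mul_nonneg (by linarith : (0:ℤ) ≤ (c:ℤ)-(a:ℤ)) (by linarith : (0:ℤ) ≤ (c:ℤ)-(a:ℤ))) (by linarith : (0:ℤ) ≤ 2*(a:ℤ)-1-(c:ℤ)),
    mul_nonneg (mul_nonneg (by linarith : (0:ℤ) ≤ (a:ℤ)) (by linarith : (0:ℤ) ≤ (c:ℤ)-(a:ℤ))) (by linarith : (0:ℤ) ≤ 2*(a:ℤ)-(c:ℤ)),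
    mul_nonneg (by linarith : (0:ℤ) ≤ (c:ℤ)-(a:ℤ)) (by linarith : (0:ℤ) ≤ 2*(a:ℤ)-(c:ℤ)),
    mul_nonneg (by linarith : (0:ℤ) ≤ (a:ℤ)-14) (by linarith : (0:ℤ) ≤ (a:ℤ))]

lemma key5 : ∀ a c, 2 ≤ a → a ≤ c → c ≤ 2*a - 1 →
    DM4 a + DM4 c ≤ E5 c + a * E4 c := by
  intro a c ha hac hc
  rcases Nat.lt_or_ge a 14 with h|h
  · exact key5_small a c ha (by omega) hac hc
  · exact key5_large a c h hac hc

lemma key5base_small : ∀ a, 3 ≤ a → a ≤ 13 → 2*DM4 a + 1 ≤ E5 a + a * E4 a := by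
  intro a ha ha13
  interval_cases a <;>
    simp [DM4v0,DM4v1,DM4v2,DM4v3,DM4v4,DM4v5,DM4v6,DM4v7,DM4v8,DM4v9,DM4v10,DM4v11,DM4v12,DM4v13, E4v0,E4v1,E4v2,E4v3,E4v4,E4v5,E4v6,E4v7,E4v8,E4v9,E4v10,E4v11,E4v12,E4v13, E5v0,E5v1,E5v2,E5v3,E5v4,E5v5,E5v6,E5v7,E5v8,E5v9,E5v10,E5v11,E5v12,E5v13]

lemma key5base : ∀ a, 3 ≤ a → 2*DM4 a + 1 ≤ E5 a + a * E4 a := by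
  intro a ha
  rcases Nat.lt_or_ge a 14 with h|h
  · exact key5base_small a ha (by omega)
  · have u4a := U4 a
    have l5 := L5E a
    have l4 := L4E a
    have ha' : (14:ℤ) ≤ (a:ℤ) := by exact_mod_cast h
    zify at u4a l5 l4 ⊢
    nlinarith [u4a, l5, l4, mul_le_mul_of_nonneg_left l4 (by linarith : (0:ℤ) ≤ (a:ℤ)),
      mul_nonneg (by linarith : (0:ℤ) ≤ (a:ℤ)-14) (mul_nonneg (natCast_nonneg' a) (natCast_nonneg' a))]



lemma mono4_base : ∀ a, 1 ≤ a → DM4 a + phi4 (a+1) (a+1) + 1 ≤ DM4 (a+1) + phi4 a (a+2) := by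
  intro a ha
  rw [DM4_succ a]
  have hsuff : phi4 (a+1) (a+1) + 1 ≤ E4 a + phi4 a (a+2) := by
    rcases Nat.lt_or_ge a 2 with h|h
    · interval_cases a
      · rw [E4v1]; simp [phi4]
    · have h31 := zc3 (a+1)
      have h32 := zc3 a
      have h33 := zc3 (a+2)
      have l4 := L4E a
      have ha' : (2:ℤ) ≤ (a:ℤ) := by exact_mod_cast h
      simp only [phi4]
      zify at l4 ⊢
      push_cast at h31 h32 h33 ⊢
      nlinarith [h31, h32, h33, l4, ha', sq_nonneg ((a:ℤ)-2), sq_nonneg ((a:ℤ)-1), sq_nonneg (a:ℤ)]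
  omega

lemma step4 : ∀ a d, 1 ≤ a → a+1 ≤ d → d ≤ 2*a - 1 →
    phi4 (a+1) (d+1) + phi4 a (d+1) ≤ phi4 (a+1) d + E4 d + phi4 a (d+2) := by
  intro a d ha had hd
  have h1 := zc3 (a+1)
  have h2 := zc3 a
  have h3 := zc3 (d+1)
  have h4 := zc3 d
  have h5 := zc3 (d+2)
  have l4 := L4E d
  have ha' : (1:ℤ) ≤ (a:ℤ) := by exact_mod_cast ha
  have had' : (a:ℤ)+1 ≤ (d:ℤ) := by exact_mod_cast had
  have hd' : (d:ℤ) ≤ 2*(a:ℤ) - 1 := by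
    have : (d:ℤ) ≤ ((2*a - 1 : ℕ) : ℤ) := by exact_mod_cast hd
    omega
  simp only [phi4]
  zify at l4 ⊢
  push_cast at h1 h2 h3 h4 h5 ⊢
  nlinarith [h1, h2, h3, h4, h5, l4, ha', had', hd',
    mul_nonneg (by linarith : (0:ℤ) ≤ (d:ℤ)-(a:ℤ)) (by linarith : (0:ℤ) ≤ 2*(a:ℤ)-1-(d:ℤ)),
    mul_nonneg (by linarith : (0:ℤ) ≤ (a:ℤ)) (by linarith : (0:ℤ) ≤ (d:ℤ))]

lemma mono4 : ∀ a c, 1 ≤ a → a+1 ≤ c → c ≤ 2*a →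
    DM4 a + phi4 (a+1) c + 1 ≤ DM4 c + phi4 a (c+1) := by
  intro a c
  induction c using Nat.strong_induction_on with
  | _ c ih =>
    intro ha hac hc
    rcases Nat.eq_or_lt_of_le hac with he|hlt
    · rw [← he]
      exact mono4_base a ha
    · obtain ⟨d, rfl⟩ : ∃ d, c = d+1 := ⟨c-1, by omega⟩
      have hih := ih d (by omega) ha (by omega) (by omega)
      have hstep := step4 a d ha (by omega) (by omega)
      have g := DM4_succ d
      have e : d+1+1 = d+2 := rfl
      rw [e]
      omega

lemma mono5 : ∀ a c, 3 ≤ a → a+1 ≤ c → c ≤ 2*a →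
    DM5 a + c * DM4 a + M4 c + 1 ≤ DM5 c + a * DM4 c + M4 a := by
  intro a c
  induction c using Nat.strong_induction_on with
  | _ c ih =>
    intro ha hac hc
    rcases Nat.eq_or_lt_of_le hac with he|hlt
    · rw [← he]
      have g1 := DM5_succ a
      have g2 := M4_succ a
      have g3 := DM4_succ a
      have kb := key5base a ha
      have p1 : (a+1) * DM4 a = a * DM4 a + DM4 a := by ring
      have p2 : a * DM4 (a+1) = a * DM4 a + a * E4 a := by rw [g3]; ring
      linarith
    · obtain ⟨d, rfl⟩ : ∃ d, c = d+1 := ⟨c-1, by omega⟩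
      have hih := ih d (by omega) ha (by omega) (by omega)
      have hkey := key5 a d (by omega) (by omega) (by omega)
      have g1 := DM5_succ d
      have g2 := M4_succ d
      have g3 := DM4_succ d
      have p1 : (d+1) * DM4 a = d * DM4 a + DM4 a := by ring
      have p2 : a * DM4 (d+1) = a * DM4 d + a * E4 d := by rw [g3]; ring
      linarith

lemma submod4_z (a b1 b2 : ℕ) : (12*(phi4 a (b1+b2) + phi4 b1 b2) : ℤ) =
    12*(phi4 a b1 + phi4 (a+b1) b2) + 6*(a:ℤ)*(b1:ℤ)*(b2:ℤ)*((b2:ℤ)-(a:ℤ)) := by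
  have z1 := zc3 (b1+b2)
  have z2 := zc3 a
  have z3 := zc3 b1
  have z4 := zc3 b2
  have z5 := zc3 (a+b1)
  simp only [phi4]
  push_cast at z1 z2 z3 z4 z5 ⊢
  linear_combination 2*(a:ℤ)*z1 + 2*(b2:ℤ)*z2 + (2*(b2:ℤ)-2*(a:ℤ))*z3 - 2*(a:ℤ)*z4 - 2*(b2:ℤ)*z5

lemma submod4_strict (a b1 b2 : ℕ) (ha : 1 ≤ a) (hb1 : 2 ≤ b1) (hb2 : a+1 ≤ b2) :
    phi4 a b1 + phi4 (a+b1) b2 + 1 ≤ phi4 a (b1+b2) + phi4 b1 b2 := by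
  have hz := submod4_z a b1 b2
  have ha' : (1:ℤ) ≤ (a:ℤ) := by exact_mod_cast ha
  have hb1' : (2:ℤ) ≤ (b1:ℤ) := by exact_mod_cast hb1
  have hb2' : (a:ℤ)+1 ≤ (b2:ℤ) := by exact_mod_cast hb2
  have t2 : (4:ℤ) ≤ (b1:ℤ)*(b2:ℤ) := by nlinarith
  have t3 : (4:ℤ) ≤ (a:ℤ)*((b1:ℤ)*(b2:ℤ)) := by nlinarith
  have t4 : (4:ℤ) ≤ ((a:ℤ)*((b1:ℤ)*(b2:ℤ)))*((b2:ℤ)-(a:ℤ)) := by nlinarith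
  zify
  linarith [hz, t4]

lemma merge5_strict (a b1 b2 : ℕ) (ha : 1 ≤ a) (hb1 : 2 ≤ b1) (hb23 : 3 ≤ b2) (hb2 : a+1 ≤ b2) :
    b2 * phi4 a b1 + 1 ≤ a * phi4 b1 b2 := by
  rcases Nat.eq_or_lt_of_le ha with he|ha2
  · subst he
    simp only [phi4]
    have hc : 0 < Nat.choose b2 3 := Nat.choose_pos hb23
    have : Nat.choose 1 3 = 0 := by decide
    rw [this]
    have h1 : 1 ≤ b1 * Nat.choose b2 3 := Nat.one_le_iff_ne_zero.mpr (by positivity)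
    nlinarith [h1]
  · have ha' : (2:ℤ) ≤ (a:ℤ) := by exact_mod_cast ha2
    have hb1' : (2:ℤ) ≤ (b1:ℤ) := by exact_mod_cast hb1
    have hb23' : (3:ℤ) ≤ (b2:ℤ) := by exact_mod_cast hb23
    have hb2' : (a:ℤ)+1 ≤ (b2:ℤ) := by exact_mod_cast hb2
    have z2 := zc3 a
    have z3 := zc3 b1
    have z4 := zc3 b2
    have hA : (0:ℤ) ≤ (a:ℤ)*(b1:ℤ)*(b2:ℤ)*(((b2:ℤ)-1)*((b2:ℤ)-2) - (a:ℤ)*((a:ℤ)-1)) := by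
      have k1 : (a:ℤ)*((a:ℤ)-1) ≤ ((b2:ℤ)-1)*((b2:ℤ)-2) := by nlinarith
      have k2 : (0:ℤ) ≤ (a:ℤ)*(b1:ℤ)*(b2:ℤ) := by positivity
      exact mul_nonneg k2 (by linarith)
    have hC : (12:ℤ) ≤ (b1:ℤ)*(b2:ℤ)*((a:ℤ)*((a:ℤ)-1)) := by
      have e2 : (2:ℤ) ≤ (a:ℤ)*((a:ℤ)-1) := by nlinarith
      have e6 : (6:ℤ) ≤ (b1:ℤ)*(b2:ℤ) := by nlinarith
      nlinarith
    have w1 : (a:ℤ)*(b2:ℤ)*(6*(Nat.choose b1 3:ℤ)) = (a:ℤ)*(b2:ℤ)*((b1:ℤ)*((b1:ℤ)-1)*((b1:ℤ)-2)) := by rw [z3]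
    have w2 : (b1:ℤ)*(b2:ℤ)*(6*(Nat.choose a 3:ℤ)) = (b1:ℤ)*(b2:ℤ)*((a:ℤ)*((a:ℤ)-1)*((a:ℤ)-2)) := by rw [z2]
    have w3 : (a:ℤ)*(b1:ℤ)*(6*(Nat.choose b2 3:ℤ)) = (a:ℤ)*(b1:ℤ)*((b2:ℤ)*((b2:ℤ)-1)*((b2:ℤ)-2)) := by rw [z4]
    simp only [phi4]
    zify
    push_cast at w1 w2 w3 ⊢
    linarith [hA, hC, w1, w2, w3]



lemma num4_aux : ∀ n, ∀ b, ∀ a, a + b = n → 1 ≤ a → a ≤ b →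
    (M4 n ≤ M4 a + M4 b + phi4 a b) ∧ (a + 2 ≤ b → M4 n + 1 ≤ M4 a + M4 b + phi4 a b) := by
  intro n
  induction n using Nat.strong_induction_on with
  | _ n ihn =>
    intro b
    induction b using Nat.strong_induction_on with
    | _ b ihb =>
      intro a hab ha hle
      rcases Nat.lt_or_ge b (a+2) with hbal|hunb
      · -- balanced
        have hn2 : 2 ≤ n := by omega
        have hh : n / 2 = a := by omega
        have e : M4 n = M4 a + M4 b + phi4 a b := by
          rw [M4_rec hn2, hh, show n - a = b by omega]
        exact ⟨le_of_eq e, fun h => by omega⟩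
      · rcases Nat.lt_or_ge b (2*a+2) with hmono|hmerge
        · -- mono case
          obtain ⟨c, rfl⟩ : ∃ c, b = c+1 := ⟨b-1, by omega⟩
          have hmono4 := mono4 a c ha (by omega) (by omega)
          have g1 := M4_succ c
          have g2 := M4_succ a
          have hin := (ihb c (by omega) (a+1) (by omega) (by omega) (by omega)).1
          constructor
          · omega
          · intro _; omega
        · -- merge case
          obtain ⟨b1, b2, rfl, hb12, hb21⟩ : ∃ b1 b2, b = b1 + b2 ∧ b1 ≤ b2 ∧ b2 ≤ b1+1 :=
            ⟨b/2, b - b/2, by omega, by omega, by omega⟩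
          have e2 : M4 (b1+b2) = M4 b1 + M4 b2 + phi4 b1 b2 := by
            rw [M4_rec (by omega), show (b1+b2)/2 = b1 by omega, show b1+b2 - b1 = b2 by omega]
          have houter := (ihn (a+b1) (by omega) b1 a rfl ha (by omega)).1
          have hsub := submod4_strict a b1 b2 ha (by omega) (by omega)
          have hinner := (ihb (a+b1) (by omega) b2 (by omega) (by omega) (by omega)).1
          have hcomm : phi4 b2 (a+b1) = phi4 (a+b1) b2 := phi4_comm _ _
          constructor
          · omega
          · intro _; omega

lemma num4_le (a b : ℕ) (ha : 1 ≤ a) (hb : 1 ≤ b) :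
    M4 (a+b) ≤ M4 a + M4 b + phi4 a b := by
  rcases le_total a b with h|h
  · exact (num4_aux (a+b) b a rfl ha h).1
  · have := (num4_aux (a+b) a b (by omega) hb h).1
    rw [phi4_comm b a] at this
    omega

lemma num4_lt (a b : ℕ) (ha : 1 ≤ a) (hb : 1 ≤ b) (h : a + 2 ≤ b ∨ b + 2 ≤ a) :
    M4 (a+b) + 1 ≤ M4 a + M4 b + phi4 a b := by
  rcases le_total a b with hle|hle
  · exact (num4_aux (a+b) b a rfl ha hle).2 (by omega)
  · have := (num4_aux (a+b) a b (by omega) hb hle).2 (by omega)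
    rw [phi4_comm b a] at this
    omega

lemma num4_eq (a b : ℕ) (ha : 1 ≤ a) (hb : 1 ≤ b) (h1 : a ≤ b+1) (h2 : b ≤ a+1) :
    M4 (a+b) = M4 a + M4 b + phi4 a b := by
  rcases le_total a b with h|h
  · rw [M4_rec (by omega), show (a+b)/2 = a by omega, show a+b-a = b by omega]
  · rw [M4_rec (by omega), show (a+b)/2 = b by omega, show a+b-b = a by omega, phi4_comm b a]
    omega

lemma M5_le8 {n : ℕ} (h : n ≤ 8) : M5 n = 0 := by
  interval_cases n
  exacts [M5v0, M5v1, M5v2, M5v3, M5v4, M5v5, M5v6, M5v7, M5v8]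

lemma num5_aux : ∀ n, ∀ b, ∀ a, a + b = n → 1 ≤ a → a ≤ b →
    (M5 n ≤ M5 a + M5 b + a * M4 b + b * M4 a) ∧
    (a + 2 ≤ b → 7 ≤ n → M5 n + 1 ≤ M5 a + M5 b + a * M4 b + b * M4 a) := by
  intro n
  induction n using Nat.strong_induction_on with
  | _ n ihn =>
    intro b
    induction b using Nat.strong_induction_on with
    | _ b ihb =>
      intro a hab ha hle
      rcases Nat.lt_or_ge b (a+2) with hbal|hunb
      · -- balanced
        have hn2 : 2 ≤ n := by omega
        have hh : n / 2 = a := by omega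
        have e : M5 n = M5 a + M5 b + a * M4 b + b * M4 a := by
          rw [M5_rec hn2, hh, show n - a = b by omega]
        exact ⟨le_of_eq e, fun h _ => by omega⟩
      · rcases Nat.lt_or_ge n 7 with hn7|hn7
        · have h0 : M5 n = 0 := M5_le8 (by omega)
          exact ⟨by omega, fun _ h7 => by omega⟩
        · rcases Nat.lt_or_ge b (2*a+2) with hmono|hmerge
          · -- mono case; here 3a+1 >= n >= 7 so a >= 2
            have ha2 : 2 ≤ a := by omega
            rcases Nat.eq_or_lt_of_le ha2 with he2|ha3
            · -- a = 2, b = 5, n = 7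
              have hb5 : b = 5 := by omega
              have hn7' : n = 7 := by omega
              subst hb5; subst hn7'
              rw [← he2, M5v2, M5v5, M5v7, M4v2, M4v5]
              norm_num
            · obtain ⟨c, rfl⟩ : ∃ c, b = c+1 := ⟨b-1, by omega⟩
              have hmono5 := mono5 a c (by omega) (by omega) (by omega)
              have g1 := M5_succ c
              have g2 := M5_succ a
              have g3 := M4_succ c
              have g4 := M4_succ a
              have hin := (ihb c (by omega) (a+1) (by omega) (by omega) (by omega)).1
              have p1 : a * M4 (c+1) = a * M4 c + a * DM4 c := by rw [g3]; ring
              have p2 : c * M4 (a+1) = c * M4 a + c * DM4 a := by rw [g4]; ring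
              have p3 : (a+1) * M4 c = a * M4 c + M4 c := by ring
              have p4 : (c+1) * M4 a = c * M4 a + M4 a := by ring
              constructor
              · linarith
              · intro _ _; linarith
          · -- merge case
            obtain ⟨b1, b2, rfl, hb12, hb21⟩ : ∃ b1 b2, b = b1 + b2 ∧ b1 ≤ b2 ∧ b2 ≤ b1+1 :=
              ⟨b/2, b - b/2, by omega, by omega, by omega⟩
            have e1 : M5 (b1+b2) = M5 b1 + M5 b2 + b1 * M4 b2 + b2 * M4 b1 := by
              rw [M5_rec (by omega), show (b1+b2)/2 = b1 by omega, show b1+b2 - b1 = b2 by omega]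
            have e2 : M4 (b1+b2) = M4 b1 + M4 b2 + phi4 b1 b2 := by
              rw [M4_rec (by omega), show (b1+b2)/2 = b1 by omega, show b1+b2 - b1 = b2 by omega]
            have h1 := (ihn (a+b1) (by omega) b1 a rfl ha (by omega)).1
            have h3 := num4_le a b1 ha (by omega)
            have h3' := Nat.mul_le_mul_left b2 h3
            have h2 := merge5_strict a b1 b2 ha (by omega) (by omega) (by omega)
            have h4 := (ihb (a+b1) (by omega) b2 (by omega) (by omega) (by omega)).1
            have q1 : a * M4 (b1+b2) = a * M4 b1 + a * M4 b2 + a * phi4 b1 b2 := by rw [e2]; ring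
            have q2 : (b1+b2) * M4 a = b1 * M4 a + b2 * M4 a := by ring
            have q4 : (a+b1) * M4 b2 = a * M4 b2 + b1 * M4 b2 := by ring
            have q5 : b2 * (M4 a + M4 b1 + phi4 a b1) = b2 * M4 a + b2 * M4 b1 + b2 * phi4 a b1 := by ring
            constructor
            · linarith
            · intro _ _; linarith

lemma num5_le (a b : ℕ) (ha : 1 ≤ a) (hb : 1 ≤ b) :
    M5 (a+b) ≤ M5 a + M5 b + a * M4 b + b * M4 a := by
  rcases le_total a b with h|h
  · exact (num5_aux (a+b) b a rfl ha h).1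
  · have := (num5_aux (a+b) a b (by omega) hb h).1
    omega

lemma num5_lt (a b : ℕ) (ha : 1 ≤ a) (hb : 1 ≤ b) (h : a + 2 ≤ b ∨ b + 2 ≤ a) (h7 : 7 ≤ a + b) :
    M5 (a+b) + 1 ≤ M5 a + M5 b + a * M4 b + b * M4 a := by
  rcases le_total a b with hle|hle
  · exact (num5_aux (a+b) b a rfl ha hle).2 (by omega) h7
  · have := (num5_aux (a+b) a b (by omega) hb hle).2 (by omega) (by omega)
    omega

lemma num5_eq (a b : ℕ) (ha : 1 ≤ a) (hb : 1 ≤ b) (h1 : a ≤ b+1) (h2 : b ≤ a+1) :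
    M5 (a+b) = M5 a + M5 b + a * M4 b + b * M4 a := by
  rcases le_total a b with h|h
  · rw [M5_rec (by omega), show (a+b)/2 = a by omega, show a+b-a = b by omega]
  · rw [M5_rec (by omega), show (a+b)/2 = b by omega, show a+b-b = a by omega]
    omega

open RBT

def C4 : UTree → ℕ
  | .leaf _ => 0
  | .node l r => C4 l + C4 r + phi4 l.numLeaves r.numLeaves

def C5 : UTree → ℕ
  | .leaf _ => 0
  | .node l r => C5 l + C5 r + l.numLeaves * C4 r + r.numLeaves * C4 l

lemma nl_pos {α : Type} (t : RBT α) : 1 ≤ t.numLeaves := by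
  induction t with
  | leaf a => exact le_refl 1
  | node l r ihl ihr => simp only [RBT.numLeaves]; omega

lemma LS4 : ∀ t : UTree, M4 t.numLeaves ≤ C4 t ∧ (C4 t = M4 t.numLeaves ↔ IsMaxBalanced t) := by
  intro t
  induction t with
  | leaf a =>
    refine ⟨by simp [RBT.numLeaves, C4, M4v1], ?_⟩
    simp [RBT.numLeaves, C4, M4v1, IsMaxBalanced]
  | node l r ihl ihr =>
    obtain ⟨hl1, hl2⟩ := ihl
    obtain ⟨hr1, hr2⟩ := ihr
    have ha := nl_pos l
    have hb := nl_pos r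
    have hnum := num4_le l.numLeaves r.numLeaves ha hb
    have hNL : (RBT.node l r).numLeaves = l.numLeaves + r.numLeaves := rfl
    have hC : C4 (RBT.node l r) = C4 l + C4 r + phi4 l.numLeaves r.numLeaves := rfl
    constructor
    · rw [hNL, hC]; omega
    · constructor
      · intro heq
        rw [hNL] at heq
        rw [hC] at heq
        -- split must be balanced
        have hbal : l.numLeaves ≤ r.numLeaves + 1 ∧ r.numLeaves ≤ l.numLeaves + 1 := by
          by_contra hcon
          have := num4_lt l.numLeaves r.numLeaves ha hb (by omega)
          omega
        have hcl : C4 l = M4 l.numLeaves := by omega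
        have hcr : C4 r = M4 r.numLeaves := by omega
        exact ⟨hbal, hl2.mp hcl, hr2.mp hcr⟩
      · intro hmb
        obtain ⟨hbal, hml, hmr⟩ := hmb
        have hcl := hl2.mpr hml
        have hcr := hr2.mpr hmr
        have := num4_eq l.numLeaves r.numLeaves ha hb (by omega) (by omega)
        rw [hNL, hC]; omega

lemma LS5 : ∀ t : UTree, M5 t.numLeaves ≤ C5 t ∧
    (IsMaxBalanced t → C5 t = M5 t.numLeaves) ∧
    (7 ≤ t.numLeaves → C5 t = M5 t.numLeaves → IsMaxBalanced t) := by
  intro t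
  induction t with
  | leaf a =>
    refine ⟨by simp [RBT.numLeaves, C5, M5v1], fun _ => by simp [RBT.numLeaves, C5, M5v1], fun h7 _ => ?_⟩
    simp [RBT.numLeaves] at h7
  | node l r ihl ihr =>
    obtain ⟨hl1, hl2, hl3⟩ := ihl
    obtain ⟨hr1, hr2, hr3⟩ := ihr
    obtain ⟨hL1, hL2⟩ := LS4 l
    obtain ⟨hR1, hR2⟩ := LS4 r
    have ha := nl_pos l
    have hb := nl_pos r
    set a := l.numLeaves with hadef
    set b := r.numLeaves with hbdef
    have hNL : (RBT.node l r).numLeaves = a + b := rfl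
    have hC : C5 (RBT.node l r) = C5 l + C5 r + a * C4 r + b * C4 l := rfl
    have m1 : a * M4 b ≤ a * C4 r := Nat.mul_le_mul_left a hR1
    have m2 : b * M4 a ≤ b * C4 l := Nat.mul_le_mul_left b hL1
    have hnum := num5_le a b ha hb
    refine ⟨by rw [hNL, hC]; omega, ?_, ?_⟩
    · intro hmb
      obtain ⟨hbal, hml, hmr⟩ := hmb
      have e1 := hl2 hml
      have e2 := hr2 hmr
      have e3 := hL2.mpr hml
      have e4 := hR2.mpr hmr
      have := num5_eq a b ha hb (by omega) (by omega)
      rw [hNL, hC, e1, e2, e3, e4]; omega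
    · intro h7 heq
      rw [hNL] at h7 heq
      rw [hC] at heq
      -- componentwise equalities
      have hbal : a ≤ b + 1 ∧ b ≤ a + 1 := by
        by_contra hcon
        have := num5_lt a b ha hb (by omega) h7
        omega
      have e3 : a * C4 r = a * M4 b := by omega
      have e4 : b * C4 l = b * M4 a := by omega
      have hcr : C4 r = M4 b := Nat.eq_of_mul_eq_mul_left (by omega) e3
      have hcl : C4 l = M4 a := Nat.eq_of_mul_eq_mul_left (by omega) e4
      exact ⟨hbal, hL2.mp hcl, hR2.mp hcr⟩


lemma cmpT_swap (x : UTree) : ∀ y, RBT.cmpT y x = (RBT.cmpT x y).swap := by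
  induction x with
  | leaf a => intro y; cases y <;> rfl
  | node a b iha ihb =>
    intro y
    cases y with
    | leaf c => rfl
    | node c d =>
      show (RBT.cmpT c a).then (RBT.cmpT d b) = ((RBT.cmpT a c).then (RBT.cmpT b d)).swap
      rw [iha c, ihb d]
      generalize RBT.cmpT a c = o1
      generalize RBT.cmpT b d = o2
      cases o1 <;> cases o2 <;> rfl

lemma cmpT_eq_of : ∀ x y : UTree, RBT.cmpT x y = .eq → x = y := by
  intro x
  induction x with
  | leaf a =>
    intro y h
    cases y with
    | leaf b => cases a; cases b; rfl
    | node c d => simp [RBT.cmpT] at h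
  | node a b iha ihb =>
    intro y h
    cases y with
    | leaf c => simp [RBT.cmpT] at h
    | node c d =>
      have h' : (RBT.cmpT a c).then (RBT.cmpT b d) = .eq := h
      cases hac : RBT.cmpT a c with
      | lt => rw [hac] at h'; simp [Ordering.then] at h'
      | gt => rw [hac] at h'; simp [Ordering.then] at h'
      | eq =>
        rw [hac] at h'
        simp [Ordering.then] at h'
        rw [iha c hac, ihb d h']

lemma canon_numLeaves : ∀ u : UTree, (RBT.canon u).numLeaves = u.numLeaves := by
  intro u
  induction u with
  | leaf a => rfl
  | node l r ihl ihr =>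
    show (if RBT.cmpT (RBT.canon l) (RBT.canon r) = Ordering.gt then
        RBT.node (RBT.canon r) (RBT.canon l) else RBT.node (RBT.canon l) (RBT.canon r)).numLeaves
      = (RBT.node l r).numLeaves
    split_ifs <;> simp only [RBT.numLeaves, ihl, ihr] <;> omega

lemma canon_node (l r : UTree) : RBT.canon (RBT.node l r) =
    if RBT.cmpT (RBT.canon l) (RBT.canon r) = Ordering.gt then RBT.node (RBT.canon r) (RBT.canon l)
    else RBT.node (RBT.canon l) (RBT.canon r) := rfl

lemma canon_idem : ∀ u : UTree, RBT.canon (RBT.canon u) = RBT.canon u := by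
  intro u
  induction u with
  | leaf a => rfl
  | node l r ihl ihr =>
    rw [canon_node]
    split_ifs with hc
    · rw [canon_node, ihl, ihr]
      have hs : RBT.cmpT (RBT.canon r) (RBT.canon l) = Ordering.lt := by
        rw [cmpT_swap, hc]; rfl
      rw [hs]
      simp
    · rw [canon_node, ihl, ihr, if_neg hc]

lemma canon_node_inv {l r : UTree} (h : RBT.canon (RBT.node l r) = RBT.node l r) :
    RBT.canon l = l ∧ RBT.canon r = r ∧ RBT.cmpT l r ≠ Ordering.gt := by
  rw [canon_node] at h
  split_ifs at h with hc
  · injection h with h1 h2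
    have e1 : RBT.canon l = l := by
      conv_lhs => rw [← h1]
      rw [canon_idem, h1]
    have e2 : RBT.canon r = r := by
      conv_lhs => rw [← h2]
      rw [canon_idem, h2]
    refine ⟨e1, e2, ?_⟩
    rw [h1, h2] at hc
    have hs := cmpT_swap r l
    rw [hc] at hs
    rw [hs]
    decide
  · injection h with h1 h2
    rw [h1, h2] at hc
    exact ⟨h1, h2, hc⟩

lemma nl_eq_one {α : Type} {t : RBT α} (h : t.numLeaves = 1) : ∃ a, t = RBT.leaf a := by
  cases t with
  | leaf a => exact ⟨a, rfl⟩
  | node l r =>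
    have := nl_pos l
    have := nl_pos r
    simp only [RBT.numLeaves] at h
    omega

def sortNode (x y : UTree) : UTree :=
  if RBT.cmpT x y = Ordering.gt then RBT.node y x else RBT.node x y

def mbal (n : ℕ) : UTree :=
  if h : n < 2 then RBT.leaf ()
  else sortNode (mbal (n / 2)) (mbal (n - n / 2))
decreasing_by all_goals omega

lemma mbal_small {n : ℕ} (h : n < 2) : mbal n = RBT.leaf () := by rw [mbal]; simp [h]

lemma mbal_rec {n : ℕ} (h : 2 ≤ n) : mbal n = sortNode (mbal (n / 2)) (mbal (n - n / 2)) := by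
  rw [mbal]; simp [Nat.not_lt.mpr h]

lemma sortNode_numLeaves (x y : UTree) : (sortNode x y).numLeaves = x.numLeaves + y.numLeaves := by
  unfold sortNode
  split_ifs <;> simp [RBT.numLeaves] <;> omega

lemma mbal_numLeaves : ∀ n, 1 ≤ n → (mbal n).numLeaves = n := by
  intro n
  induction n using Nat.strong_induction_on with
  | _ n ih =>
    intro h1
    rcases Nat.lt_or_ge n 2 with h|h
    · rw [mbal_small h]
      have : n = 1 := by omega
      simp [this, RBT.numLeaves]
    · rw [mbal_rec h, sortNode_numLeaves, ih (n/2) (by omega) (by omega),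
        ih (n - n/2) (by omega) (by omega)]
      omega

lemma sortNode_maxBal {x y : UTree} (hx : IsMaxBalanced x) (hy : IsMaxBalanced y)
    (hb : x.numLeaves ≤ y.numLeaves + 1) (hb' : y.numLeaves ≤ x.numLeaves + 1) :
    IsMaxBalanced (sortNode x y) := by
  unfold sortNode
  split_ifs
  · exact ⟨⟨hb', hb⟩, hy, hx⟩
  · exact ⟨⟨hb, hb'⟩, hx, hy⟩

lemma mbal_maxBal : ∀ n, IsMaxBalanced (mbal n) := by
  intro n
  induction n using Nat.strong_induction_on with
  | _ n ih =>
    rcases Nat.lt_or_ge n 2 with h|h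
    · rw [mbal_small h]; trivial
    · rw [mbal_rec h]
      exact sortNode_maxBal (ih (n/2) (by omega)) (ih (n - n/2) (by omega))
        (by rw [mbal_numLeaves _ (by omega), mbal_numLeaves _ (by omega)]; omega)
        (by rw [mbal_numLeaves _ (by omega), mbal_numLeaves _ (by omega)]; omega)

lemma mbal_canon : ∀ n, RBT.canon (mbal n) = mbal n := by
  intro n
  induction n using Nat.strong_induction_on with
  | _ n ih =>
    rcases Nat.lt_or_ge n 2 with h|h
    · rw [mbal_small h]; rfl
    · rw [mbal_rec h]
      have ih1 := ih (n/2) (by omega)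
      have ih2 := ih (n - n/2) (by omega)
      unfold sortNode
      split_ifs with hc
      · rw [canon_node, ih1, ih2]
        have hs : RBT.cmpT (mbal (n - n/2)) (mbal (n/2)) = Ordering.lt := by
          rw [cmpT_swap, hc]; rfl
        rw [hs]
        simp
      · rw [canon_node, ih1, ih2, if_neg hc]

lemma mbal_unique : ∀ n u, RBT.canon u = u → u.numLeaves = n → IsMaxBalanced u → u = mbal n := by
  intro n
  induction n using Nat.strong_induction_on with
  | _ n ih =>
    intro u hcan hnl hmb
    rcases Nat.lt_or_ge n 2 with h|h
    · have h1 : u.numLeaves = 1 := by have := nl_pos u; omega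
      obtain ⟨a, rfl⟩ := nl_eq_one h1
      cases a
      rw [mbal_small (by omega : n < 2)]
    · cases u with
      | leaf a => simp [RBT.numLeaves] at hnl; omega
      | node l r =>
        obtain ⟨hcl, hcr, hcmp⟩ := canon_node_inv hcan
        obtain ⟨⟨hb1, hb2⟩, hml, hmr⟩ := hmb
        have hNL : l.numLeaves + r.numLeaves = n := hnl
        have hal := nl_pos l
        have har := nl_pos r
        have el := ih l.numLeaves (by omega) l hcl rfl hml
        have er := ih r.numLeaves (by omega) r hcr rfl hmr
        rw [mbal_rec h]
        unfold sortNode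
        rcases le_or_gt l.numLeaves r.numLeaves with hlr|hgt
        · have e1 : l.numLeaves = n/2 := by omega
          have e2 : r.numLeaves = n - n/2 := by omega
          have fl : l = mbal (n/2) := by rw [el, e1]
          have fr : r = mbal (n - n/2) := by rw [er, e2]
          rw [if_neg (by rw [← fl, ← fr]; exact hcmp)]
          rw [fl, fr]
        · have e1 : r.numLeaves = n/2 := by omega
          have e2 : l.numLeaves = n - n/2 := by omega
          have fl : l = mbal (n - n/2) := by rw [el, e2]
          have fr : r = mbal (n/2) := by rw [er, e1]
          have hne : mbal (n/2) ≠ mbal (n - n/2) := by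
            intro hcon
            have := congrArg RBT.numLeaves hcon
            rw [mbal_numLeaves _ (by omega), mbal_numLeaves _ (by omega)] at this
            omega
          split_ifs with hc
          · rw [fl, fr]
          · exfalso
            have h2' : RBT.cmpT (mbal (n - n/2)) (mbal (n/2)) ≠ Ordering.gt := by
              rw [← fl, ← fr]; exact hcmp
            have hs := cmpT_swap (mbal (n/2)) (mbal (n - n/2))
            cases ho : RBT.cmpT (mbal (n/2)) (mbal (n - n/2)) with
            | gt => exact hc ho
            | eq => exact hne (cmpT_eq_of _ _ ho)
            | lt =>
              rw [ho] at hs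
              exact h2' hs


open RBT

lemma nl_card {α : Type} (t : RBT α) : t.numLeaves = Multiset.card t.leaves := by
  induction t with
  | leaf a => rfl
  | node l r ihl ihr => simp [RBT.numLeaves, RBT.leaves, ihl, ihr]

lemma nl_forget {α : Type} (t : RBT α) : (RBT.forget t).numLeaves = t.numLeaves := by
  induction t with
  | leaf a => rfl
  | node l r ihl ihr =>
    show (RBT.node (RBT.forget l) (RBT.forget r)).numLeaves = _
    simp [RBT.numLeaves, ihl, ihr]

lemma restrict_node (A : Finset ℕ) (l r : RBT ℕ) :
    RBT.restrict A (RBT.node l r) = match RBT.restrict A l, RBT.restrict A r with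
      | some l', some r' => some (RBT.node l' r')
      | some l', none => some l'
      | none, some r' => some r'
      | none, none => none := by
  rw [RBT.restrict]
  cases RBT.restrict A l <;> cases RBT.restrict A r <;> rfl

lemma restrict_none_iff (t : RBT ℕ) (A : Finset ℕ) :
    RBT.restrict A t = none ↔ ∀ x ∈ t.leaves, x ∉ A := by
  induction t with
  | leaf a => by_cases h : a ∈ A <;> simp [RBT.restrict, RBT.leaves, h]
  | node l r ihl ihr =>
    have e : RBT.restrict A (RBT.node l r) = match RBT.restrict A l, RBT.restrict A r with
      | some l', some r' => some (RBT.node l' r')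
      | some l', none => some l'
      | none, some r' => some r'
      | none, none => none := restrict_node A l r
    rw [e]
    cases hl : RBT.restrict A l <;> cases hr : RBT.restrict A r <;>
      simp_all [RBT.leaves, Multiset.mem_add, or_imp, forall_and]

lemma restrict_leaves : ∀ (t : RBT ℕ) (A : Finset ℕ) (t' : RBT ℕ),
    RBT.restrict A t = some t' → t'.leaves = t.leaves.filter (· ∈ A) := by
  intro t
  induction t with
  | leaf a =>
    intro A t' h
    by_cases ha : a ∈ A
    · simp only [RBT.restrict, if_pos ha] at h
      cases h
      simp [RBT.leaves, Multiset.filter_singleton, ha]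
    · simp [RBT.restrict, if_neg ha] at h
  | node l r ihl ihr =>
    intro A t' h
    have e : RBT.restrict A (RBT.node l r) = match RBT.restrict A l, RBT.restrict A r with
      | some l', some r' => some (RBT.node l' r')
      | some l', none => some l'
      | none, some r' => some r'
      | none, none => none := restrict_node A l r
    rw [e] at h
    have hle : (RBT.node l r).leaves = l.leaves + r.leaves := rfl
    cases hl : RBT.restrict A l <;> cases hr : RBT.restrict A r <;> rw [hl, hr] at h
    · simp at h
    · simp at h
      have h0 : ∀ x ∈ l.leaves, x ∉ A := (restrict_none_iff l A).mp hl
      have : Multiset.filter (· ∈ A) l.leaves = 0 := Multiset.filter_eq_nil.mpr h0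
      rw [hle, Multiset.filter_add, this, ← h, ihr A _ hr]
      simp
    · simp at h
      have h0 : ∀ x ∈ r.leaves, x ∉ A := (restrict_none_iff r A).mp hr
      have : Multiset.filter (· ∈ A) r.leaves = 0 := Multiset.filter_eq_nil.mpr h0
      rw [hle, Multiset.filter_add, this, ← h, ihl A _ hl]
      simp
    · simp at h
      rw [← h]
      show _ = Multiset.filter (· ∈ A) (l.leaves + r.leaves)
      rw [Multiset.filter_add, ← ihl A _ hl, ← ihr A _ hr]
      rfl

lemma restrict_congr : ∀ (t : RBT ℕ) (A B : Finset ℕ),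
    (∀ x ∈ t.leaves, (x ∈ A ↔ x ∈ B)) → RBT.restrict A t = RBT.restrict B t := by
  intro t
  induction t with
  | leaf a =>
    intro A B h
    have := h a (by simp [RBT.leaves])
    simp only [RBT.restrict]
    by_cases ha : a ∈ A
    · rw [if_pos ha, if_pos (this.mp ha)]
    · rw [if_neg ha, if_neg (fun hb => ha (this.mpr hb))]
  | node l r ihl ihr =>
    intro A B h
    have hA : ∀ x ∈ l.leaves, (x ∈ A ↔ x ∈ B) := fun x hx => h x (by simp [RBT.leaves, hx])
    have hB : ∀ x ∈ r.leaves, (x ∈ A ↔ x ∈ B) := fun x hx => h x (by simp [RBT.leaves, hx])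
    have e : ∀ C : Finset ℕ, RBT.restrict C (RBT.node l r) = match RBT.restrict C l, RBT.restrict C r with
      | some l', some r' => some (RBT.node l' r')
      | some l', none => some l'
      | none, some r' => some r'
      | none, none => none := fun C => restrict_node C l r
    rw [e A, e B, ihl A B hA, ihr A B hB]

lemma restrict_isSome (t : RBT ℕ) (A : Finset ℕ) {x : ℕ} (hx : x ∈ t.leaves) (hA : x ∈ A) :
    ∃ t', RBT.restrict A t = some t' := by
  cases h : RBT.restrict A t with
  | none => exact absurd hA ((restrict_none_iff t A).mp h x hx)
  | some t' => exact ⟨t', rfl⟩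

lemma restrict_card {t : RBT ℕ} (hnd : t.leaves.Nodup) (A : Finset ℕ) {t' : RBT ℕ}
    (h : RBT.restrict A t = some t') :
    t'.numLeaves = (t.leaves.toFinset ∩ A).card := by
  rw [nl_card, restrict_leaves t A t' h, ← Finset.filter_mem_eq_inter]
  have hval : t.leaves.toFinset.val = t.leaves := Multiset.dedup_eq_self.mpr hnd
  rw [Finset.card_def, Finset.filter_val, hval]


lemma shape_node' (x y : RBT ℕ) : RBT.shape (RBT.node x y) =
    if RBT.cmpT (RBT.shape x) (RBT.shape y) = Ordering.gt then RBT.node (RBT.shape y) (RBT.shape x)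
    else RBT.node (RBT.shape x) (RBT.shape y) := by
  show RBT.canon (RBT.forget (RBT.node x y)) = _
  have e : RBT.forget (RBT.node x y) = RBT.node (RBT.forget x) (RBT.forget y) := rfl
  rw [e, canon_node]
  rfl

lemma shape_eq_leaf_iff (t : RBT ℕ) : RBT.shape t = RBT.leaf () ↔ t.numLeaves = 1 := by
  cases t with
  | leaf a => simp [RBT.shape, RBT.forget, RBT.map, RBT.canon, RBT.numLeaves]
  | node l r =>
    rw [shape_node']
    have h1 := nl_pos l
    have h2 := nl_pos r
    have h3 : (RBT.node l r).numLeaves = l.numLeaves + r.numLeaves := rfl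
    split_ifs <;> simp [h3] <;> omega

lemma nl_eq_two {t : RBT ℕ} (h : t.numLeaves = 2) :
    ∃ a b, t = RBT.node (RBT.leaf a) (RBT.leaf b) := by
  cases t with
  | leaf a => simp [RBT.numLeaves] at h
  | node l r =>
    have h1 := nl_pos l
    have h2 := nl_pos r
    have h3 : l.numLeaves + r.numLeaves = 2 := h
    have hl1 : l.numLeaves = 1 := by omega
    have hr1 : r.numLeaves = 1 := by omega
    obtain ⟨a, rfl⟩ := nl_eq_one hl1
    obtain ⟨b, rfl⟩ := nl_eq_one hr1
    exact ⟨a, b, rfl⟩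

lemma shape_leaf' (a : ℕ) : RBT.shape (RBT.leaf a) = RBT.leaf () := rfl

lemma shape_two {t : RBT ℕ} (h : t.numLeaves = 2) :
    RBT.shape t = RBT.node (RBT.leaf ()) (RBT.leaf ()) := by
  obtain ⟨a, b, rfl⟩ := nl_eq_two h
  rfl

lemma shape_three {t : RBT ℕ} (h : t.numLeaves = 3) :
    RBT.shape t = RBT.canon (combU 3) := by
  cases t with
  | leaf a => simp [RBT.numLeaves] at h
  | node l r =>
    have h1 := nl_pos l
    have h2 := nl_pos r
    have h3 : l.numLeaves + r.numLeaves = 3 := h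
    have hcan : RBT.canon (combU 3) = RBT.node (RBT.leaf ()) (RBT.node (RBT.leaf ()) (RBT.leaf ())) := by decide
    rw [shape_node', hcan]
    rcases (show l.numLeaves = 1 ∧ r.numLeaves = 2 ∨ l.numLeaves = 2 ∧ r.numLeaves = 1 by omega) with ⟨e1,e2⟩|⟨e1,e2⟩
    · obtain ⟨a, rfl⟩ := nl_eq_one e1
      rw [shape_leaf', shape_two e2]
      rfl
    · obtain ⟨a, rfl⟩ := nl_eq_one e2
      rw [shape_leaf', shape_two e1]
      rfl

lemma shape_node_eq (x y : RBT ℕ) (p q : UTree) :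
    RBT.shape (RBT.node x y) = RBT.node (RBT.leaf ()) (RBT.node p q) ↔
      ((RBT.shape x = RBT.leaf () ∧ RBT.shape y = RBT.node p q) ∨
       (RBT.shape x = RBT.node p q ∧ RBT.shape y = RBT.leaf ())) := by
  rw [shape_node']
  split_ifs with hc
  · constructor
    · intro h
      injection h with h1 h2
      right; exact ⟨h2, h1⟩
    · rintro (⟨h1, h2⟩ | ⟨h1, h2⟩)
      · rw [h1, h2] at hc; simp [RBT.cmpT] at hc
      · rw [h1, h2]
  · constructor
    · intro h
      injection h with h1 h2
      left; exact ⟨h1, h2⟩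
    · rintro (⟨h1, h2⟩ | ⟨h1, h2⟩)
      · rw [h1, h2]
      · rw [h1, h2] at hc
        exact absurd (rfl : RBT.cmpT (RBT.node p q) (RBT.leaf ()) = Ordering.gt) hc

def cnt (s : UTree) (k : ℕ) (T : RBT ℕ) : ℕ :=
  ((T.leaves.toFinset.powersetCard k).filter
    (fun A => Option.map RBT.shape (RBT.restrict A T) = some (RBT.canon s))).card

lemma cnt_leaf (s : UTree) (k : ℕ) (hk : 2 ≤ k) (a : ℕ) : cnt s k (RBT.leaf a) = 0 := by
  unfold cnt
  have hcard : (RBT.leaf a : RBT ℕ).leaves.toFinset.card < k := by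
    have : (RBT.leaf a : RBT ℕ).leaves.toFinset.card ≤ 1 := by
      show ({a} : Multiset ℕ).toFinset.card ≤ 1
      simp
    omega
  rw [Finset.powersetCard_eq_empty.mpr hcard]
  simp


lemma card_insert_image (SL SR : Finset ℕ) (G : Finset (Finset ℕ))
    (hG : ∀ B ∈ G, B ⊆ SR) (hd : Disjoint SL SR) :
    ((SL ×ˢ G).image fun pr => insert pr.1 pr.2).card = SL.card * G.card := by
  rw [Finset.card_image_of_injOn, Finset.card_product]
  intro pr hp qr hq he
  simp only [Finset.coe_product, Set.mem_prod, Finset.mem_coe] at hp hq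
  have hp2 : pr.2 ⊆ SR := hG _ hp.2
  have hq2 : qr.2 ⊆ SR := hG _ hq.2
  have hp1 : pr.1 ∉ pr.2 := fun h => Finset.disjoint_left.mp hd hp.1 (hp2 h)
  have hq1 : qr.1 ∉ qr.2 := fun h => Finset.disjoint_left.mp hd hq.1 (hq2 h)
  simp only at he
  have e1 : pr.1 = qr.1 := by
    have h1 : pr.1 ∈ insert qr.1 qr.2 := he ▸ Finset.mem_insert_self pr.1 pr.2
    rcases Finset.mem_insert.mp h1 with h|h
    · exact h
    · exact absurd (hq2 h) (Finset.disjoint_left.mp hd hp.1)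
  have e2 : pr.2 = qr.2 := by
    ext y
    constructor
    · intro hy
      have h1 : y ∈ insert qr.1 qr.2 := he ▸ Finset.mem_insert_of_mem hy
      rcases Finset.mem_insert.mp h1 with h|h
      · exact absurd hy (h ▸ e1 ▸ hp1)
      · exact h
    · intro hy
      have h1 : y ∈ insert pr.1 pr.2 := he ▸ Finset.mem_insert_of_mem hy
      rcases Finset.mem_insert.mp h1 with h|h
      · exact absurd hy (h ▸ e1.symm ▸ hq1)
      · exact h
  exact Prod.ext e1 e2

lemma cnt_node_step (p q : UTree) (hcan : RBT.canon (RBT.node p q) = RBT.node p q)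
    (k : ℕ) (hk : 2 ≤ k) (L R : RBT ℕ) (hnd : (RBT.node L R).leaves.Nodup) :
    cnt (RBT.node (RBT.leaf ()) (RBT.node p q)) (k+1) (RBT.node L R) =
      cnt (RBT.node (RBT.leaf ()) (RBT.node p q)) (k+1) L
      + cnt (RBT.node (RBT.leaf ()) (RBT.node p q)) (k+1) R
      + L.leaves.toFinset.card * cnt (RBT.node p q) k R
      + R.leaves.toFinset.card * cnt (RBT.node p q) k L := by
  set s₀ := RBT.node p q with hs₀
  set c := RBT.node (RBT.leaf ()) s₀ with hcc
  have hcanc : RBT.canon c = c := by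
    rw [hcc, canon_node, hcan]
    have e1 : RBT.canon (RBT.leaf () : UTree) = RBT.leaf () := rfl
    rw [e1]
    have : RBT.cmpT (RBT.leaf () : UTree) s₀ = Ordering.lt := rfl
    rw [this]
    simp
  set SL := L.leaves.toFinset with hSL
  set SR := R.leaves.toFinset with hSR
  have hndall : (L.leaves + R.leaves).Nodup := hnd
  obtain ⟨hndL, hndR, hdm0⟩ := Multiset.nodup_add.mp hndall
  have hdm : ∀ {a : ℕ}, a ∈ L.leaves → a ∉ R.leaves := fun {a} => Multiset.disjoint_left.mp hdm0
  have hdisj : Disjoint SL SR := by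
    rw [Finset.disjoint_left]
    intro x hx1 hx2
    exact hdm (Multiset.mem_toFinset.mp hx1) (Multiset.mem_toFinset.mp hx2)
  set F := ((SL ∪ SR).powersetCard (k+1)).filter
      (fun A => Option.map RBT.shape (RBT.restrict A (RBT.node L R)) = some c) with hF
  set F1 := (SL.powersetCard (k+1)).filter
      (fun A => Option.map RBT.shape (RBT.restrict A L) = some c) with hF1
  set F2 := (SR.powersetCard (k+1)).filter
      (fun A => Option.map RBT.shape (RBT.restrict A R) = some c) with hF2
  set G4R := (SR.powersetCard k).filter
      (fun B => Option.map RBT.shape (RBT.restrict B R) = some s₀) with hG4R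
  set G4L := (SL.powersetCard k).filter
      (fun B => Option.map RBT.shape (RBT.restrict B L) = some s₀) with hG4L
  set F3 := ((SL ×ˢ G4R).image fun pr => insert pr.1 pr.2) with hF3
  set F4 := ((SR ×ˢ G4L).image fun pr => insert pr.1 pr.2) with hF4
  have eSun : (RBT.node L R).leaves.toFinset = SL ∪ SR := by
    show (L.leaves + R.leaves).toFinset = _
    rw [Multiset.toFinset_add]
  have goal_lhs : cnt c (k+1) (RBT.node L R) = F.card := by
    unfold cnt
    rw [hcanc, eSun]
  have goal_r1 : cnt c (k+1) L = F1.card := by unfold cnt; rw [hcanc]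
  have goal_r2 : cnt c (k+1) R = F2.card := by unfold cnt; rw [hcanc]
  have goal_r3 : cnt s₀ k R = G4R.card := by unfold cnt; rw [hcan]
  have goal_r4 : cnt s₀ k L = G4L.card := by unfold cnt; rw [hcan]
  have memL : ∀ x, x ∈ SL ↔ x ∈ L.leaves := fun x => Multiset.mem_toFinset
  have memR : ∀ x, x ∈ SR ↔ x ∈ R.leaves := fun x => Multiset.mem_toFinset
  have hrnode := fun (A : Finset ℕ) => restrict_node A L R
  have hcup : F = F1 ∪ F2 ∪ F3 ∪ F4 := by
    ext A
    simp only [hF, hF1, hF2, hF3, hF4, Finset.mem_union, Finset.mem_filter,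
      Finset.mem_powersetCard, Finset.mem_image, Finset.mem_product, Prod.exists]
    constructor
    · rintro ⟨⟨hsub, hcard⟩, hPA⟩
      by_cases hARe : A ∩ SR = ∅
      · have hAsub : A ⊆ SL := by
          intro x hx
          rcases Finset.mem_union.mp (hsub hx) with h|h
          · exact h
          · exact absurd (Finset.mem_inter.mpr ⟨hx, h⟩) (by rw [hARe]; simp)
        left; left; left
        refine ⟨⟨hAsub, hcard⟩, ?_⟩
        have hrR : RBT.restrict A R = none := by
          rw [restrict_none_iff]
          intro x hx hxA
          exact absurd (Finset.mem_inter.mpr ⟨hxA, (memR x).mpr hx⟩) (by rw [hARe]; simp)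
        rw [hrnode A, hrR] at hPA
        cases hrL : RBT.restrict A L with
        | none => rw [hrL] at hPA; simp at hPA
        | some l' => rw [hrL] at hPA; exact hPA
      · by_cases hALe : A ∩ SL = ∅
        · have hAsub : A ⊆ SR := by
            intro x hx
            rcases Finset.mem_union.mp (hsub hx) with h|h
            · exact absurd (Finset.mem_inter.mpr ⟨hx, h⟩) (by rw [hALe]; simp)
            · exact h
          left; left; right
          refine ⟨⟨hAsub, hcard⟩, ?_⟩
          have hrL : RBT.restrict A L = none := by
            rw [restrict_none_iff]
            intro x hx hxA
            exact absurd (Finset.mem_inter.mpr ⟨hxA, (memL x).mpr hx⟩) (by rw [hALe]; simp)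
          rw [hrnode A, hrL] at hPA
          cases hrR : RBT.restrict A R with
          | none => rw [hrR] at hPA; simp at hPA
          | some r' => rw [hrR] at hPA; exact hPA
        · obtain ⟨xl, hxl⟩ := Finset.nonempty_of_ne_empty hALe
          obtain ⟨xr, hxr⟩ := Finset.nonempty_of_ne_empty hARe
          obtain ⟨hxlA, hxlL⟩ := Finset.mem_inter.mp hxl
          obtain ⟨hxrA, hxrR⟩ := Finset.mem_inter.mp hxr
          obtain ⟨L', hL'⟩ := restrict_isSome L A ((memL xl).mp hxlL) hxlA
          obtain ⟨R', hR'⟩ := restrict_isSome R A ((memR xr).mp hxrR) hxrA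
          rw [hrnode A, hL', hR'] at hPA
          simp only [Option.map_some] at hPA
          have hPA' : RBT.shape (RBT.node L' R') = c := by injection hPA
          rw [hcc, hs₀, shape_node_eq] at hPA'
          have hLcard : L'.numLeaves = (SL ∩ A).card := restrict_card hndL A hL'
          have hRcard : R'.numLeaves = (SR ∩ A).card := restrict_card hndR A hR'
          have hd2 : Disjoint (SL ∩ A) (SR ∩ A) :=
            Disjoint.mono Finset.inter_subset_left Finset.inter_subset_left hdisj
          have hsplit : (SL ∩ A).card + (SR ∩ A).card = k + 1 := by
            rw [← Finset.card_union_of_disjoint hd2, ← hcard]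
            congr 1
            ext y
            simp only [Finset.mem_union, Finset.mem_inter]
            constructor
            · rintro (⟨h1, h2⟩|⟨h1, h2⟩) <;> exact h2
            · intro hy
              rcases Finset.mem_union.mp (hsub hy) with h|h
              · exact Or.inl ⟨h, hy⟩
              · exact Or.inr ⟨h, hy⟩
          rcases hPA' with ⟨hshL, hshR⟩ | ⟨hshL, hshR⟩
          · -- F3
            left; right
            have h1 : (SL ∩ A).card = 1 := by
              rw [← hLcard]
              exact (shape_eq_leaf_iff L').mp hshL
            obtain ⟨x, hx⟩ := Finset.card_eq_one.mp h1
            have hxSL : x ∈ SL := by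
              have : x ∈ SL ∩ A := hx ▸ Finset.mem_singleton_self x
              exact (Finset.mem_inter.mp this).1
            have hmemG : A ∩ SR ∈ G4R := by
              rw [hG4R]
              refine Finset.mem_filter.mpr ⟨Finset.mem_powersetCard.mpr ⟨Finset.inter_subset_right, by rw [Finset.inter_comm]; omega⟩, ?_⟩
              have hcongr : RBT.restrict (A ∩ SR) R = RBT.restrict A R := by
                apply restrict_congr
                intro y hy
                simp only [Finset.mem_inter]
                exact ⟨fun h => h.1, fun h => ⟨h, (memR y).mpr hy⟩⟩
              rw [hcongr, hR', Option.map_some, hshR]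
            refine ⟨x, A ∩ SR, ⟨hxSL, hmemG⟩, ?_⟩
            · ext y
              simp only [Finset.mem_insert, Finset.mem_inter]
              constructor
              · rintro (h|⟨h1', h2⟩)
                · have hxa : x ∈ SL ∩ A := hx ▸ Finset.mem_singleton_self x
                  exact h ▸ (Finset.mem_inter.mp hxa).2
                · exact h1'
              · intro hy
                rcases Finset.mem_union.mp (hsub hy) with h|h
                · left
                  have : y ∈ SL ∩ A := Finset.mem_inter.mpr ⟨h, hy⟩
                  rw [hx] at this
                  exact Finset.mem_singleton.mp this
                · right; exact ⟨hy, h⟩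
          · -- F4
            right
            have h1 : (SR ∩ A).card = 1 := by
              rw [← hRcard]
              exact (shape_eq_leaf_iff R').mp hshR
            obtain ⟨x, hx⟩ := Finset.card_eq_one.mp h1
            have hxSR : x ∈ SR := by
              have : x ∈ SR ∩ A := hx ▸ Finset.mem_singleton_self x
              exact (Finset.mem_inter.mp this).1
            have hmemG : A ∩ SL ∈ G4L := by
              rw [hG4L]
              refine Finset.mem_filter.mpr ⟨Finset.mem_powersetCard.mpr ⟨Finset.inter_subset_right, by rw [Finset.inter_comm]; omega⟩, ?_⟩
              have hcongr : RBT.restrict (A ∩ SL) L = RBT.restrict A L := by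
                apply restrict_congr
                intro y hy
                simp only [Finset.mem_inter]
                exact ⟨fun h => h.1, fun h => ⟨h, (memL y).mpr hy⟩⟩
              rw [hcongr, hL', Option.map_some, hshL]
            refine ⟨x, A ∩ SL, ⟨hxSR, hmemG⟩, ?_⟩
            · ext y
              simp only [Finset.mem_insert, Finset.mem_inter]
              constructor
              · rintro (h|⟨h1', h2⟩)
                · have hxa : x ∈ SR ∩ A := hx ▸ Finset.mem_singleton_self x
                  exact h ▸ (Finset.mem_inter.mp hxa).2
                · exact h1'
              · intro hy
                rcases Finset.mem_union.mp (hsub hy) with h|h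
                · right; exact ⟨hy, h⟩
                · left
                  have : y ∈ SR ∩ A := Finset.mem_inter.mpr ⟨h, hy⟩
                  rw [hx] at this
                  exact Finset.mem_singleton.mp this
    · intro h
      rcases h with ((⟨⟨hsub, hcard⟩, hpred⟩|⟨⟨hsub, hcard⟩, hpred⟩)|⟨x, B, ⟨hxSL, hBG⟩, hxA⟩)|⟨x, B, ⟨hxSR, hBG⟩, hxA⟩
      · have hrR : RBT.restrict A R = none := by
          rw [restrict_none_iff]
          intro y hy hyA
          exact Finset.disjoint_left.mp hdisj (hsub hyA) ((memR y).mpr hy)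
        refine ⟨⟨hsub.trans Finset.subset_union_left, hcard⟩, ?_⟩
        rw [hrnode A, hrR]
        cases hrL : RBT.restrict A L with
        | none => rw [hrL] at hpred; simp at hpred
        | some l' => rw [hrL] at hpred; exact hpred
      · have hrL : RBT.restrict A L = none := by
          rw [restrict_none_iff]
          intro y hy hyA
          exact Finset.disjoint_left.mp hdisj ((memL y).mpr hy) (hsub hyA)
        refine ⟨⟨hsub.trans Finset.subset_union_right, hcard⟩, ?_⟩
        rw [hrnode A, hrL]
        cases hrR : RBT.restrict A R with
        | none => rw [hrR] at hpred; simp at hpred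
        | some r' => rw [hrR] at hpred; exact hpred
      · -- from F3
        rw [hG4R] at hBG
        obtain ⟨h1', hBpred⟩ := Finset.mem_filter.mp hBG
        obtain ⟨hBsub, hBcard⟩ := Finset.mem_powersetCard.mp h1'
        subst hxA
        have hxL : x ∈ L.leaves := (memL x).mp hxSL
        have hxnB : x ∉ B := fun h => Finset.disjoint_left.mp hdisj hxSL (hBsub h)
        refine ⟨⟨?_, ?_⟩, ?_⟩
        · intro y hy
          rcases Finset.mem_insert.mp hy with rfl|h
          · exact Finset.mem_union_left _ hxSL
          · exact Finset.mem_union_right _ (hBsub h)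
        · rw [Finset.card_insert_of_notMem hxnB, hBcard]
        · have hrL : RBT.restrict (insert x B) L = RBT.restrict {x} L := by
            apply restrict_congr
            intro y hy
            simp only [Finset.mem_insert, Finset.mem_singleton]
            constructor
            · rintro (rfl|h)
              · rfl
              · exact absurd ((memL y).mpr hy)
                  (fun hh => Finset.disjoint_left.mp hdisj hh (hBsub h))
            · rintro rfl; exact Or.inl rfl
          obtain ⟨L', hL'⟩ := restrict_isSome L {x} hxL (Finset.mem_singleton_self x)
          have hL'leaf : RBT.shape L' = RBT.leaf () := by
            rw [shape_eq_leaf_iff, restrict_card hndL {x} hL']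
            have hxx : SL ∩ {x} = {x} := by
              ext y
              simp only [Finset.mem_inter, Finset.mem_singleton]
              exact ⟨fun h => h.2, fun h => ⟨h ▸ hxSL, h⟩⟩
            rw [hxx, Finset.card_singleton]
          have hcongr : RBT.restrict (insert x B) R = RBT.restrict B R := by
            apply restrict_congr
            intro y hy
            simp only [Finset.mem_insert]
            constructor
            · rintro (rfl|h)
              · exact absurd ((memR y).mpr hy)
                  (fun hh => Finset.disjoint_left.mp hdisj hxSL hh)
              · exact h
            · exact Or.inr
          cases hrB : RBT.restrict B R with
          | none => rw [hrB] at hBpred; simp at hBpred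
          | some r' =>
            rw [hrB] at hBpred
            simp only [Option.map_some] at hBpred
            have hshR : RBT.shape r' = s₀ := by injection hBpred
            rw [hrnode _, hrL, hL', hcongr, hrB]
            simp only [Option.map_some]
            congr 1
            rw [hcc, hs₀, shape_node_eq]
            left
            exact ⟨hL'leaf, by rw [hshR, hs₀]⟩
      · -- from F4
        rw [hG4L] at hBG
        obtain ⟨h1', hBpred⟩ := Finset.mem_filter.mp hBG
        obtain ⟨hBsub, hBcard⟩ := Finset.mem_powersetCard.mp h1'
        subst hxA
        have hxR : x ∈ R.leaves := (memR x).mp hxSR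
        have hxnB : x ∉ B := fun h => Finset.disjoint_left.mp hdisj (hBsub h) hxSR
        refine ⟨⟨?_, ?_⟩, ?_⟩
        · intro y hy
          rcases Finset.mem_insert.mp hy with rfl|h
          · exact Finset.mem_union_right _ hxSR
          · exact Finset.mem_union_left _ (hBsub h)
        · rw [Finset.card_insert_of_notMem hxnB, hBcard]
        · have hrR : RBT.restrict (insert x B) R = RBT.restrict {x} R := by
            apply restrict_congr
            intro y hy
            simp only [Finset.mem_insert, Finset.mem_singleton]
            constructor
            · rintro (rfl|h)
              · rfl
              · exact absurd ((memR y).mpr hy)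
                  (fun hh => Finset.disjoint_left.mp hdisj (hBsub h) hh)
            · rintro rfl; exact Or.inl rfl
          obtain ⟨R', hR'⟩ := restrict_isSome R {x} hxR (Finset.mem_singleton_self x)
          have hR'leaf : RBT.shape R' = RBT.leaf () := by
            rw [shape_eq_leaf_iff, restrict_card hndR {x} hR']
            have hxx : SR ∩ {x} = {x} := by
              ext y
              simp only [Finset.mem_inter, Finset.mem_singleton]
              exact ⟨fun h => h.2, fun h => ⟨h ▸ hxSR, h⟩⟩
            rw [hxx, Finset.card_singleton]
          have hcongr : RBT.restrict (insert x B) L = RBT.restrict B L := by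
            apply restrict_congr
            intro y hy
            simp only [Finset.mem_insert]
            constructor
            · rintro (rfl|h)
              · exact absurd ((memL y).mpr hy)
                  (fun hh => Finset.disjoint_left.mp hdisj hh hxSR)
              · exact h
            · exact Or.inr
          cases hrB : RBT.restrict B L with
          | none => rw [hrB] at hBpred; simp at hBpred
          | some l' =>
            rw [hrB] at hBpred
            simp only [Option.map_some] at hBpred
            have hshL : RBT.shape l' = s₀ := by injection hBpred
            rw [hrnode _, hcongr, hrB, hrR, hR']
            simp only [Option.map_some]
            congr 1
            rw [hcc, hs₀, shape_node_eq]
            right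
            exact ⟨by rw [hshL, hs₀], hR'leaf⟩
  -- measures for disjointness
  have dF1 : ∀ A ∈ F1, (A ∩ SL).card = k+1 := by
    intro A hA
    obtain ⟨h1, _⟩ := Finset.mem_filter.mp hA
    obtain ⟨hsub, hcard⟩ := Finset.mem_powersetCard.mp h1
    rw [Finset.inter_eq_left.mpr hsub, hcard]
  have dF2 : ∀ A ∈ F2, (A ∩ SL).card = 0 := by
    intro A hA
    obtain ⟨h1, _⟩ := Finset.mem_filter.mp hA
    obtain ⟨hsub, _⟩ := Finset.mem_powersetCard.mp h1
    rw [Finset.card_eq_zero]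
    ext y
    simp only [Finset.mem_inter, Finset.notMem_empty, iff_false, not_and]
    intro hy hySL
    exact Finset.disjoint_left.mp hdisj hySL (hsub hy)
  have dF3 : ∀ A ∈ F3, (A ∩ SL).card = 1 := by
    intro A hA
    simp only [hF3, Finset.mem_image, Finset.mem_product, Prod.exists] at hA
    obtain ⟨x, B, ⟨hxSL, hBG⟩, rfl⟩ := hA
    rw [hG4R] at hBG
    obtain ⟨h1, _⟩ := Finset.mem_filter.mp hBG
    obtain ⟨hBsub, _⟩ := Finset.mem_powersetCard.mp h1
    have : insert x B ∩ SL = {x} := by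
      ext y
      simp only [Finset.mem_inter, Finset.mem_insert, Finset.mem_singleton]
      constructor
      · rintro ⟨rfl|h, hySL⟩
        · rfl
        · exact absurd hySL (fun hh => Finset.disjoint_left.mp hdisj hh (hBsub h))
      · rintro rfl
        exact ⟨Or.inl rfl, hxSL⟩
    rw [this, Finset.card_singleton]
  have dF4 : ∀ A ∈ F4, (A ∩ SL).card = k := by
    intro A hA
    simp only [hF4, Finset.mem_image, Finset.mem_product, Prod.exists] at hA
    obtain ⟨x, B, ⟨hxSR, hBG⟩, rfl⟩ := hA
    rw [hG4L] at hBG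
    obtain ⟨h1, _⟩ := Finset.mem_filter.mp hBG
    obtain ⟨hBsub, hBcard⟩ := Finset.mem_powersetCard.mp h1
    have : insert x B ∩ SL = B := by
      ext y
      simp only [Finset.mem_inter, Finset.mem_insert]
      constructor
      · rintro ⟨rfl|h, hySL⟩
        · exact absurd hySL (fun hh => Finset.disjoint_left.mp hdisj hh hxSR)
        · exact h
      · intro hy
        exact ⟨Or.inr hy, hBsub hy⟩
    rw [this, hBcard]
  have d12 : Disjoint F1 F2 := Finset.disjoint_left.mpr fun A h1 h2 => by
    have := dF1 A h1; have := dF2 A h2; omega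
  have d123 : Disjoint (F1 ∪ F2) F3 := Finset.disjoint_left.mpr fun A h1 h2 => by
    have := dF3 A h2
    rcases Finset.mem_union.mp h1 with h|h
    · have := dF1 A h; omega
    · have := dF2 A h; omega
  have d1234 : Disjoint (F1 ∪ F2 ∪ F3) F4 := Finset.disjoint_left.mpr fun A h1 h2 => by
    have := dF4 A h2
    rcases Finset.mem_union.mp h1 with h|h
    · rcases Finset.mem_union.mp h with h'|h'
      · have := dF1 A h'; omega
      · have := dF2 A h'; omega
    · have := dF3 A h; omega
  have cardF3 : F3.card = SL.card * G4R.card := by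
    rw [hF3]
    apply card_insert_image SL SR G4R _ hdisj
    intro B hB
    rw [hG4R] at hB
    exact (Finset.mem_powersetCard.mp (Finset.mem_filter.mp hB).1).1
  have cardF4 : F4.card = SR.card * G4L.card := by
    rw [hF4]
    apply card_insert_image SR SL G4L _ hdisj.symm
    intro B hB
    rw [hG4L] at hB
    exact (Finset.mem_powersetCard.mp (Finset.mem_filter.mp hB).1).1
  rw [goal_lhs, goal_r1, goal_r2, goal_r3, goal_r4, hcup,
    Finset.card_union_of_disjoint d1234, Finset.card_union_of_disjoint d123,
    Finset.card_union_of_disjoint d12, cardF3, cardF4]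


lemma cnt3_eq (T : RBT ℕ) (hnd : T.leaves.Nodup) :
    cnt (combU 3) 3 T = Nat.choose T.leaves.toFinset.card 3 := by
  unfold cnt
  rw [Finset.filter_true_of_mem, Finset.card_powersetCard]
  intro A hA
  obtain ⟨hsub, hcard⟩ := Finset.mem_powersetCard.mp hA
  have hne : A.Nonempty := Finset.card_pos.mp (by omega)
  obtain ⟨x, hx⟩ := hne
  obtain ⟨T', hT'⟩ := restrict_isSome T A (Multiset.mem_toFinset.mp (hsub hx)) hx
  have hcard' : T'.numLeaves = 3 := by
    rw [restrict_card hnd A hT', Finset.inter_eq_right.mpr hsub, hcard]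
  rw [hT', Option.map_some, shape_three hcard']

lemma card_toFinset_nl (T : RBT ℕ) (hnd : T.leaves.Nodup) :
    T.leaves.toFinset.card = T.numLeaves := by
  rw [Multiset.toFinset_card_of_nodup hnd, nl_card]

lemma bridge : ∀ T : RBT ℕ, T.leaves.Nodup →
    cnt (combU 4) 4 T = C4 (RBT.forget T) ∧ cnt (combU 5) 5 T = C5 (RBT.forget T) := by
  intro T
  induction T with
  | leaf a =>
    intro _
    constructor
    · rw [cnt_leaf _ _ (by norm_num)]; rfl
    · rw [cnt_leaf _ _ (by norm_num)]; rfl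
  | node L R ihl ihr =>
    intro hnd
    have hndall : (L.leaves + R.leaves).Nodup := hnd
    obtain ⟨hndL, hndR, _⟩ := Multiset.nodup_add.mp hndall
    have e4 : combU 4 = RBT.node (RBT.leaf ()) (RBT.node (RBT.leaf ())
        (RBT.node (RBT.leaf ()) (RBT.leaf ()))) := rfl
    have e5 : combU 5 = RBT.node (RBT.leaf ()) (RBT.node (RBT.leaf ()) (RBT.node (RBT.leaf ())
        (RBT.node (RBT.leaf ()) (RBT.leaf ())))) := rfl
    have e3 : combU 3 = RBT.node (RBT.leaf ()) (RBT.node (RBT.leaf ()) (RBT.leaf ())) := rfl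
    have hcan3 : RBT.canon (RBT.node (RBT.leaf ()) (RBT.node (RBT.leaf ()) (RBT.leaf ()))) =
        RBT.node (RBT.leaf ()) (RBT.node (RBT.leaf ()) (RBT.leaf ())) := by decide
    have hcan4 : RBT.canon (RBT.node (RBT.leaf ()) (RBT.node (RBT.leaf ())
        (RBT.node (RBT.leaf ()) (RBT.leaf ())))) = RBT.node (RBT.leaf ()) (RBT.node (RBT.leaf ())
        (RBT.node (RBT.leaf ()) (RBT.leaf ()))) := by decide
    have step4 := cnt_node_step (RBT.leaf ()) (RBT.node (RBT.leaf ()) (RBT.leaf ())) hcan3 3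
      (by norm_num) L R hnd
    have step5 := cnt_node_step (RBT.leaf ()) (RBT.node (RBT.leaf ())
      (RBT.node (RBT.leaf ()) (RBT.leaf ()))) hcan4 4 (by norm_num) L R hnd
    have hfn : RBT.forget (RBT.node L R) = RBT.node (RBT.forget L) (RBT.forget R) := rfl
    have hC4 : C4 (RBT.node (RBT.forget L) (RBT.forget R)) =
        C4 (RBT.forget L) + C4 (RBT.forget R) +
        phi4 (RBT.forget L).numLeaves (RBT.forget R).numLeaves := rfl
    have hC5 : C5 (RBT.node (RBT.forget L) (RBT.forget R)) =
        C5 (RBT.forget L) + C5 (RBT.forget R) +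
        (RBT.forget L).numLeaves * C4 (RBT.forget R) +
        (RBT.forget R).numLeaves * C4 (RBT.forget L) := rfl
    have hcl := card_toFinset_nl L hndL
    have hcr := card_toFinset_nl R hndR
    have hnlL := nl_forget L
    have hnlR := nl_forget R
    have step4' : cnt (combU 4) 4 (RBT.node L R) = cnt (combU 4) 4 L + cnt (combU 4) 4 R
        + L.leaves.toFinset.card * cnt (combU 3) 3 R
        + R.leaves.toFinset.card * cnt (combU 3) 3 L := by
      rw [e4, e3]; exact step4
    have step5' : cnt (combU 5) 5 (RBT.node L R) = cnt (combU 5) 5 L + cnt (combU 5) 5 R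
        + L.leaves.toFinset.card * cnt (combU 4) 4 R
        + R.leaves.toFinset.card * cnt (combU 4) 4 L := by
      rw [e5, e4]; exact step5
    constructor
    · rw [step4', cnt3_eq L hndL, cnt3_eq R hndR, hfn, hC4]
      rw [(ihl hndL).1, (ihr hndR).1]
      unfold phi4
      rw [hcl, hcr, hnlL, hnlR]
      ring
    · rw [step5', hfn, hC5]
      rw [(ihl hndL).2, (ihr hndR).2, (ihl hndL).1, (ihr hndR).1]
      rw [hcl, hcr, hnlL, hnlR]

lemma labelFrom_node (l r : UTree) (k : ℕ) :
    labelFrom (RBT.node l r) k =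
      (RBT.node (labelFrom l k).1 (labelFrom r (labelFrom l k).2).1,
       (labelFrom r (labelFrom l k).2).2) := rfl

lemma labelFrom_snd : ∀ (u : UTree) (k : ℕ), (labelFrom u k).2 = k + u.numLeaves := by
  intro u
  induction u with
  | leaf a => intro k; rfl
  | node l r ihl ihr =>
    intro k
    rw [labelFrom_node]
    simp only
    rw [ihr, ihl]
    show k + l.numLeaves + r.numLeaves = k + (RBT.node l r).numLeaves
    have : (RBT.node l r).numLeaves = l.numLeaves + r.numLeaves := rfl
    omega

lemma labelFrom_mem : ∀ (u : UTree) (k x : ℕ), x ∈ ((labelFrom u k).1).leaves →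
    k ≤ x ∧ x < k + u.numLeaves := by
  intro u
  induction u with
  | leaf a =>
    intro k x hx
    have hxk : x ∈ ({k} : Multiset ℕ) := hx
    rw [Multiset.mem_singleton] at hxk
    have hnl1 : (RBT.leaf a : UTree).numLeaves = 1 := rfl
    rw [hnl1]
    omega
  | node l r ihl ihr =>
    intro k x hx
    rw [labelFrom_node] at hx
    have hx' : x ∈ ((labelFrom l k).1).leaves + ((labelFrom r (labelFrom l k).2).1).leaves := hx
    have hnl : (RBT.node l r).numLeaves = l.numLeaves + r.numLeaves := rfl
    rcases Multiset.mem_add.mp hx' with h|h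
    · have := ihl k x h
      omega
    · have := ihr (labelFrom l k).2 x h
      rw [labelFrom_snd] at this
      omega

lemma labelFrom_nodup : ∀ (u : UTree) (k : ℕ), ((labelFrom u k).1).leaves.Nodup := by
  intro u
  induction u with
  | leaf a => intro k; show ({k} : Multiset ℕ).Nodup; simp
  | node l r ihl ihr =>
    intro k
    rw [labelFrom_node]
    show (((labelFrom l k).1).leaves + ((labelFrom r (labelFrom l k).2).1).leaves).Nodup
    rw [Multiset.nodup_add]
    refine ⟨ihl k, ihr _, ?_⟩
    rw [Multiset.disjoint_left]
    intro x hx1 hx2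
    have h1 := labelFrom_mem l k x hx1
    have h2 := labelFrom_mem r (labelFrom l k).2 x hx2
    rw [labelFrom_snd] at h2
    omega

lemma forget_labelFrom : ∀ (u : UTree) (k : ℕ), RBT.forget ((labelFrom u k).1) = u := by
  intro u
  induction u with
  | leaf a => intro k; cases a; rfl
  | node l r ihl ihr =>
    intro k
    rw [labelFrom_node]
    show RBT.node (RBT.forget (labelFrom l k).1) (RBT.forget (labelFrom r (labelFrom l k).2).1) = _
    rw [ihl, ihr]

lemma c5_eq_C5 (u : UTree) : c5 u = C5 u := by
  have h := (bridge (label u) (labelFrom_nodup u 0)).2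
  have hf : RBT.forget (label u) = u := forget_labelFrom u 0
  rw [hf] at h
  exact h

lemma nl_label (u : UTree) : (label u).numLeaves = u.numLeaves := by
  conv_rhs => rw [← forget_labelFrom u 0]
  rw [nl_forget]
  rfl

end PF

/-- For every `n ≥ 7`, the minimum of `c₅` over all rooted
binary tree shapes with `n` leaves is attained uniquely at the maximally
balanced shape, i.e. the unique shape in `RB_U(n)` in which at every internal
vertex the leaf counts of the two child subtrees differ by at most one. -/
theorem c5_min_balanced (n : ℕ) (hn : 7 ≤ n) :
    (∃! u : UTree, RBT.canon u = u ∧ u.numLeaves = n ∧ IsMaxBalanced u) ∧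
      (∀ u : UTree, RBT.canon u = u → u.numLeaves = n →
        (IsMaxBalanced u ↔
          ∀ v : UTree, RBT.canon v = v → v.numLeaves = n → v ≠ u → c5 u < c5 v)) := by
  constructor
  · exact ⟨PF.mbal n, ⟨PF.mbal_canon n, PF.mbal_numLeaves n (by omega), PF.mbal_maxBal n⟩,
      fun v ⟨h1, h2, h3⟩ => PF.mbal_unique n v h1 h2 h3⟩
  · intro u hcan hnl
    constructor
    · intro hmb v hcanv hnlv hne
      have hvn : ¬ IsMaxBalanced v := by
        intro hv
        exact hne ((PF.mbal_unique n v hcanv hnlv hv).trans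
          (PF.mbal_unique n u hcan hnl hmb).symm)
      have hu5 : PF.C5 u = PF.M5 n := by
        have := (PF.LS5 u).2.1 hmb
        rw [hnl] at this
        exact this
      have hv5le := (PF.LS5 v).1
      rw [hnlv] at hv5le
      have hv5ne : PF.C5 v ≠ PF.M5 n := by
        intro he
        exact hvn ((PF.LS5 v).2.2 (by omega) (by rw [hnlv, he]))
      rw [PF.c5_eq_C5, PF.c5_eq_C5, hu5]
      omega
    · intro hmin
      by_contra hnm
      have hne : PF.mbal n ≠ u := by
        intro he
        exact hnm (he ▸ PF.mbal_maxBal n)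
      have hlt := hmin (PF.mbal n) (PF.mbal_canon n) (PF.mbal_numLeaves n (by omega)) hne
      have hm5 : PF.C5 (PF.mbal n) = PF.M5 n := by
        have := (PF.LS5 (PF.mbal n)).2.1 (PF.mbal_maxBal n)
        rw [PF.mbal_numLeaves n (by omega)] at this
        exact this
      have hu5le := (PF.LS5 u).1
      rw [hnl] at hu5le
      rw [PF.c5_eq_C5, PF.c5_eq_C5, hm5] at hlt
      omega
end

section
/- For k ≥ 3, let T_{2^k} be the complete balanced binary tree with 2^k leaves, and let b_5(k) and g_5(k) be the numbers of 5-element leaf subsets of T_{2^k} whose restriction tree has shape Bal_5 and Gir_5, respectively. Then b_5(k) = (1/315)·2^{k−2}·(2^k−4)·(2^k−2)·(2^k−1)·(7·2^k−11) and g_5(k) = (1/105)·2^{k−3}·(2^k−4)·(2^k−3)·(2^k−2)·(2^k−1); consequently the induced subtree densities satisfy b_5(k)/C(2^k,5) = 2/3 + 20/(21·(2^k−3)) and g_5(k)/C(2^k,5) = 1/7, so as k → ∞ the density vector (p_1, p_2, p_3) for (Comb_5, Gir_5, Bal_5) converges to (4/21, 1/7, 2/3). -/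
/-! A leaf set of `T_{2^(k+1)}` splits into leaf sets of its two halves `T_{2^k}`, and the shape of
its restriction is the canonical join of the shapes of the two parts. Since the shapes with at most
five leaves can be listed explicitly, one reads off which splits produce a given shape: apart
from splits with an empty part, `Bal_4` arises only as `2 + 2`, `Bal_5` only as `2 + 3` or `3 + 2`,
and `Gir_5` only as `1 + 4` or `4 + 1` with the four leaves forming `Bal_4`. This gives the linear
recurrences `b₄(k+1) = 2 b₄(k) + C(2^k,2)²`, `b₅(k+1) = 2 b₅(k) + 2 C(2^k,2) C(2^k,3)` and
`g₅(k+1) = 2 g₅(k) + 2·2^k b₄(k)`, solved by induction; in particular `7 g₅(k) = C(2^k,5)`.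
The same list shows that `Comb_5`, `Gir_5` and `Bal_5` exhaust the five-leaf shapes, so the comb
density is the complement of the other two. -/

namespace RBT

variable {α β : Type}

lemma one_le_numLeaves (t : RBT α) : 1 ≤ t.numLeaves := by
  induction t with
  | leaf => rfl
  | node l r ihl ihr => simp only [numLeaves]; omega

lemma card_leaves (t : RBT α) : Multiset.card t.leaves = t.numLeaves := by
  induction t with
  | leaf => rfl
  | node l r ihl ihr => simp [leaves, numLeaves, ihl, ihr]

lemma leaves_map (f : α → β) (t : RBT α) : (t.map f).leaves = t.leaves.map f := by
  induction t with
  | leaf => rfl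
  | node l r ihl ihr => simp [leaves, map, ihl, ihr]

lemma forget_map (f : α → β) (t : RBT α) : (t.map f).forget = t.forget := by
  induction t with
  | leaf => rfl
  | node l r ihl ihr => exact congrArg₂ node ihl ihr

lemma shape_map (f : α → β) (t : RBT α) : (t.map f).shape = t.shape := by
  rw [shape, forget_map, shape]

/-- The canonical form of the tree with children `a` and `b`, when `a` and `b` are canonical. -/
def canonNode (a b : UTree) : UTree :=
  if cmpT a b = .gt then node b a else node a b

lemma shape_node (l r : RBT α) : (node l r).shape = canonNode l.shape r.shape := rfl

section Restrict

variable [DecidableEq α] [DecidableEq β]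

lemma restrict_node (A : Finset α) (l r : RBT α) :
    restrict A (node l r) = Option.merge node (restrict A l) (restrict A r) := by
  simp only [restrict]
  cases restrict A l <;> cases restrict A r <;> rfl

lemma restrict_empty (t : RBT α) : restrict ∅ t = none := by
  induction t with
  | leaf => simp [restrict]
  | node l r ihl ihr => simp [restrict_node, ihl, ihr]

lemma restrict_congr {A B : Finset α} {t : RBT α} (h : ∀ a ∈ t.leaves, a ∈ A ↔ a ∈ B) :
    restrict A t = restrict B t := by
  induction t with
  | leaf a => simp [restrict, h a (Multiset.mem_singleton_self a)]
  | node l r ihl ihr =>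
    rw [restrict_node, restrict_node,
      ihl fun a ha => h a (Multiset.mem_add.2 (.inl ha)),
      ihr fun a ha => h a (Multiset.mem_add.2 (.inr ha))]

lemma restrict_map {f : α → β} (hf : f.Injective) (A : Finset β) (t : RBT α) :
    restrict A (t.map f) = (restrict (A.preimage f hf.injOn) t).map (map f) := by
  induction t with
  | leaf a => by_cases ha : f a ∈ A <;> simp [map, restrict, ha]
  | node l r ihl ihr =>
    simp only [map, restrict_node, ihl, ihr]
    cases restrict (A.preimage f hf.injOn) l <;> cases restrict (A.preimage f hf.injOn) r <;> rfl

lemma leaves_restrict (A : Finset α) (t : RBT α) :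
    ((restrict A t).map leaves).getD 0 = t.leaves.filter (· ∈ A) := by
  induction t with
  | leaf a => by_cases ha : a ∈ A <;> simp [restrict, leaves, ha, Multiset.filter_singleton]
  | node l r ihl ihr =>
    rw [restrict_node, leaves, Multiset.filter_add, ← ihl, ← ihr]
    cases restrict A l <;> cases restrict A r <;> simp [leaves]

lemma exists_restrict_eq_some {A : Finset α} {t : RBT α} (hnd : t.leaves.Nodup)
    (hA : ∀ a ∈ A, a ∈ t.leaves) (hne : A.Nonempty) :
    ∃ t', restrict A t = some t' ∧ t'.numLeaves = A.card := by
  have hfilter : t.leaves.filter (· ∈ A) = A.val :=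
    Multiset.Nodup.ext (hnd.filter _) A.nodup |>.2 fun a => by simpa using hA a
  have h := leaves_restrict A t
  rw [hfilter] at h
  cases hr : restrict A t with
  | none =>
    obtain ⟨a, ha⟩ := hne
    simp only [hr, Option.map_none, Option.getD_none] at h
    rw [Finset.mem_def, ← h] at ha
    exact absurd ha (Multiset.notMem_zero a)
  | some t' =>
    refine ⟨t', rfl, ?_⟩
    simp only [hr, Option.map_some, Option.getD_some] at h
    rw [← card_leaves, h, Finset.card_val]

end Restrict

end RBT

open Finset

noncomputable def shiftDown (p : ℕ) (A : Finset ℕ) : Finset ℕ :=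
  A.preimage (· + p) (add_left_injective p).injOn

@[simp]
lemma mem_shiftDown {p a : ℕ} {A : Finset ℕ} : a ∈ shiftDown p A ↔ a + p ∈ A := by
  simp [shiftDown]

lemma inter_range_union_map_shiftDown (p : ℕ) (A : Finset ℕ) :
    A ∩ range p ∪ (shiftDown p A).map (addRightEmbedding p) = A := by
  ext a
  simp only [mem_union, mem_inter, mem_range, mem_map,
    addRightEmbedding_apply, mem_shiftDown]
  constructor
  · rintro (⟨ha, -⟩ | ⟨b, hb, rfl⟩) <;> assumption
  · intro ha
    by_cases hap : a < p
    · exact .inl ⟨ha, hap⟩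
    · have hpa := Nat.sub_add_cancel (not_lt.1 hap)
      exact .inr ⟨a - p, by rwa [hpa], hpa⟩

section Join

variable {p : ℕ} {B : Finset ℕ} (C : Finset ℕ)

lemma union_map_inter_range (hB : B ⊆ range p) :
    (B ∪ C.map (addRightEmbedding p)) ∩ range p = B := by
  ext a
  have := @hB a
  simp only [mem_inter, mem_union, mem_map, addRightEmbedding_apply,
    mem_range] at this ⊢
  constructor
  · rintro ⟨ha | ⟨b, -, rfl⟩, hap⟩
    exacts [ha, absurd hap (by omega)]
  · exact fun ha => ⟨.inl ha, this ha⟩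

lemma shiftDown_union_map (hB : B ⊆ range p) :
    shiftDown p (B ∪ C.map (addRightEmbedding p)) = C := by
  ext a
  have := @hB (a + p)
  simp only [mem_shiftDown, mem_union, mem_map, addRightEmbedding_apply,
    add_left_inj, exists_eq_right, mem_range] at this ⊢
  exact ⟨fun h => h.resolve_left fun h' => by have := this h'; omega, .inr⟩

lemma card_union_map (hB : B ⊆ range p) : #(B ∪ C.map (addRightEmbedding p)) = #B + #C := by
  rw [card_union_of_disjoint, card_map]
  rw [disjoint_left]
  intro a ha
  have := mem_range.1 (hB ha)
  simp only [mem_map, addRightEmbedding_apply, not_exists, not_and]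
  omega

end Join

lemma card_filter_powersetCard_range_add_eq_card_pairs (p q n : ℕ)
    (P : Finset ℕ → Finset ℕ → Prop) [∀ B C, Decidable (P B C)] :
    #{A ∈ (range (p + q)).powersetCard n | P (A ∩ range p) (shiftDown p A)} =
      #{x ∈ (range p).powerset ×ˢ (range q).powerset | #x.1 + #x.2 = n ∧ P x.1 x.2} := by
  refine card_nbij' (fun A => (A ∩ range p, shiftDown p A))
    (fun x => x.1 ∪ x.2.map (addRightEmbedding p)) ?_ ?_ ?_ ?_
  · intro A hA
    simp only [coe_filter, mem_powersetCard, Set.mem_ofPred_eq] at hA ⊢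
    obtain ⟨⟨hsub, rfl⟩, hP⟩ := hA
    refine ⟨mem_product.2 ⟨mem_powerset.2 inter_subset_right, mem_powerset.2 ?_⟩, ?_, hP⟩
    · intro a ha
      have := mem_range.1 (hsub (mem_shiftDown.1 ha))
      exact mem_range.2 (by omega)
    · conv_rhs => rw [← inter_range_union_map_shiftDown p A]
      exact (card_union_map _ inter_subset_right).symm
  · rintro ⟨B, C⟩ hx
    simp only [coe_filter, mem_product, mem_powerset, mem_powersetCard, Set.mem_ofPred_eq] at hx ⊢
    obtain ⟨⟨hB, hC⟩, hcard, hP⟩ := hx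
    refine ⟨⟨union_subset (hB.trans (range_subset_range.2 (by omega))) ?_,
      by rw [card_union_map _ hB, hcard]⟩, by rwa [union_map_inter_range _ hB,
        shiftDown_union_map _ hB]⟩
    intro a ha
    obtain ⟨b, hb, rfl⟩ := mem_map.1 ha
    have := mem_range.1 (hC hb)
    simp only [addRightEmbedding_apply, mem_range]
    omega
  · intro A _
    exact inter_range_union_map_shiftDown p A
  · rintro ⟨B, C⟩ hx
    simp only [coe_filter, mem_product, mem_powerset, Set.mem_ofPred_eq] at hx
    exact Prod.ext (union_map_inter_range _ hx.1.1) (shiftDown_union_map _ hx.1.1)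

lemma card_filter_powersetCard_range_add (p q n : ℕ) (P : Finset ℕ → Finset ℕ → Prop)
    [∀ B C, Decidable (P B C)] :
    #{A ∈ (range (p + q)).powersetCard n | P (A ∩ range p) (shiftDown p A)} =
      ∑ i ∈ range (n + 1),
        #{x ∈ (range p).powersetCard i ×ˢ (range q).powersetCard (n - i) | P x.1 x.2} := by
  rw [card_filter_powersetCard_range_add_eq_card_pairs,
    card_eq_sum_card_fiberwise (f := fun x => #x.1) (t := range (n + 1))]
  · refine sum_congr rfl fun i hi => congrArg card ?_
    rw [mem_range] at hi
    ext ⟨B, C⟩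
    simp only [mem_filter, mem_product, mem_powerset, mem_powersetCard]
    constructor
    · rintro ⟨⟨⟨hB, hC⟩, hcard, hP⟩, rfl⟩
      exact ⟨⟨⟨hB, rfl⟩, hC, by omega⟩, hP⟩
    · rintro ⟨⟨⟨hB, rfl⟩, hC, hcard⟩, hP⟩
      exact ⟨⟨⟨hB, hC⟩, by omega, hP⟩, rfl⟩
  · intro x hx
    simp only [coe_filter, Set.mem_ofPred_eq, coe_range, Set.mem_Iio] at hx ⊢
    omega

lemma labelFrom_snd (u : UTree) (c : ℕ) : (labelFrom u c).2 = c + u.numLeaves := by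
  induction u generalizing c with
  | leaf => rfl
  | node l r ihl ihr => simp only [labelFrom, ihl, ihr, RBT.numLeaves]; omega

lemma labelFrom_add (u : UTree) (c d : ℕ) :
    (labelFrom u (d + c)).1 = (labelFrom u d).1.map (· + c) := by
  induction u generalizing d with
  | leaf => rfl
  | node l r ihl ihr =>
    simp only [labelFrom, labelFrom_snd, RBT.map, ihl, ← ihr]
    rw [Nat.add_right_comm]

lemma label_node (l r : UTree) :
    label (.node l r) = .node (label l) ((label r).map (· + l.numLeaves)) := by
  simp only [label, labelFrom, labelFrom_snd, zero_add]
  rw [← labelFrom_add, zero_add]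

lemma leaves_label (u : UTree) : (label u).leaves = Multiset.range u.numLeaves := by
  induction u with
  | leaf => rfl
  | node l r ihl ihr =>
    rw [label_node, RBT.leaves, RBT.numLeaves, RBT.leaves_map, ihl, ihr, Multiset.range_add]
    exact congrArg _ (Multiset.map_congr rfl fun _ _ => Nat.add_comm _ _)

def restrShape (u : UTree) (A : Finset ℕ) : Option UTree :=
  (RBT.restrict A (label u)).map RBT.shape

lemma countRestr_eq_card (u s : UTree) (n : ℕ) :
    countRestr u s n =
      #{A ∈ (range u.numLeaves).powersetCard n | restrShape u A = some (RBT.canon s)} := by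
  rw [countRestr, leaves_label, Multiset.toFinset_range]
  rfl

lemma restrShape_node (l r : UTree) (A : Finset ℕ) :
    restrShape (.node l r) A = Option.merge RBT.canonNode
      (restrShape l (A ∩ range l.numLeaves)) (restrShape r (shiftDown l.numLeaves A)) := by
  have hl : RBT.restrict A (label l) = RBT.restrict (A ∩ range l.numLeaves) (label l) :=
    RBT.restrict_congr fun a ha => by
      rw [leaves_label, Multiset.mem_range] at ha
      simp [ha]
  simp only [restrShape, label_node, RBT.restrict_node, hl,
    RBT.restrict_map (add_left_injective l.numLeaves)]
  rw [← shiftDown]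
  cases RBT.restrict (A ∩ range l.numLeaves) (label l) <;>
    cases RBT.restrict (shiftDown l.numLeaves A) (label r) <;>
    simp [RBT.shape_node, RBT.shape_map]

lemma exists_restrShape_eq_some {u : UTree} {A : Finset ℕ} (hA : A ⊆ range u.numLeaves)
    (hne : A.Nonempty) : ∃ t : RBT ℕ, restrShape u A = some t.shape ∧ t.numLeaves = #A := by
  obtain ⟨t, ht, hcard⟩ := RBT.exists_restrict_eq_some (t := label u)
    (by rw [leaves_label]; exact Multiset.nodup_range _)
    (fun a ha => by rw [leaves_label, Multiset.mem_range]; exact mem_range.1 (hA ha)) hne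
  exact ⟨t, by rw [restrShape, ht, Option.map_some], hcard⟩

lemma restrShape_empty (u : UTree) : restrShape u ∅ = none := by
  rw [restrShape, RBT.restrict_empty, Option.map_none]

/-- All shapes with at most five leaves, as canonical forms, sorted by number of leaves. -/
def smallShapes : ℕ → List UTree
  | 1 => [.leaf ()]
  | 2 => [combU 2]
  | 3 => [combU 3]
  | 4 => [combU 4, bal4U]
  | 5 => [combU 5, gir5U, bal5U]
  | _ => []

lemma canonNode_mem_smallShapes {i j : ℕ} (hi : 1 ≤ i) (hj : 1 ≤ j) (hij : i + j ≤ 5) :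
    ∀ a ∈ smallShapes i, ∀ b ∈ smallShapes j,
      RBT.canonNode a b ∈ smallShapes (i + j) := by
  have hi5 : i ≤ 4 := by omega
  have hj5 : j ≤ 4 := by omega
  interval_cases i <;> interval_cases j <;> first | omega | decide

lemma shape_mem_smallShapes {α : Type} (t : RBT α) (ht : t.numLeaves ≤ 5) :
    t.shape ∈ smallShapes t.numLeaves := by
  induction t with
  | leaf => exact List.mem_singleton_self _
  | node l r ihl ihr =>
    simp only [RBT.numLeaves] at ht ⊢
    have hl := l.one_le_numLeaves
    have hr := r.one_le_numLeaves
    exact canonNode_mem_smallShapes hl hr ht _ (ihl (by omega)) _ (ihr (by omega))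

lemma canon_eq_self_of_mem_smallShapes {n : ℕ} {a : UTree} (ha : a ∈ smallShapes n) :
    RBT.canon a = a := by
  rcases n with _ | _ | _ | _ | _ | _ | n <;> simp only [smallShapes, List.mem_cons,
    List.not_mem_nil, or_false] at ha <;> rcases ha with rfl | rfl | rfl <;> decide

lemma sum_countRestr_smallShapes (u : UTree) {n : ℕ} (hn : 0 < n) (hn5 : n ≤ 5) :
    ((smallShapes n).map fun a => countRestr u a n).sum = u.numLeaves.choose n := by
  have hnd : (smallShapes n).Nodup := by interval_cases n <;> decide
  have hshape : ∀ A ∈ (range u.numLeaves).powersetCard n,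
      ∃ t : RBT ℕ, restrShape u A = some t.shape ∧ t.numLeaves = n := fun A hA => by
    obtain ⟨hsub, hcard⟩ := mem_powersetCard.1 hA
    rw [← hcard]
    exact exists_restrShape_eq_some hsub (card_pos.1 (hcard ▸ hn))
  rw [← List.sum_toFinset _ hnd, ← card_range u.numLeaves, ← card_powersetCard,
    card_eq_sum_card_fiberwise (f := fun A => (restrShape u A).getD (.leaf ()))
      (t := (smallShapes n).toFinset)]
  · refine sum_congr rfl fun a ha => ?_
    rw [countRestr_eq_card, canon_eq_self_of_mem_smallShapes (List.mem_toFinset.1 ha)]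
    refine congrArg card (filter_congr fun A hA => ?_)
    obtain ⟨t, ht, -⟩ := hshape A hA
    simp [ht]
  · intro A hA
    obtain ⟨t, ht, htn⟩ := hshape A hA
    simpa [ht, ← htn] using shape_mem_smallShapes t (htn ▸ hn5)

/-- The number of pairs of an `i`-subset of the leaves of `l` and a `j`-subset of the leaves of
`r` which together restrict `node l r` to the shape `s`. -/
def countSplit (l r : UTree) (i j : ℕ) (s : UTree) : ℕ :=
  #{x ∈ (range l.numLeaves).powersetCard i ×ˢ (range r.numLeaves).powersetCard j |
    Option.merge RBT.canonNode (restrShape l x.1) (restrShape r x.2) = some (RBT.canon s)}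

lemma countRestr_node (l r s : UTree) (n : ℕ) :
    countRestr (.node l r) s n = ∑ i ∈ range (n + 1), countSplit l r i (n - i) s := by
  simp only [countRestr_eq_card, RBT.numLeaves, restrShape_node]
  exact card_filter_powersetCard_range_add _ _ n
    fun B C => Option.merge RBT.canonNode (restrShape l B) (restrShape r C) = some (RBT.canon s)

lemma countSplit_zero_left (l r s : UTree) (n : ℕ) :
    countSplit l r 0 n s = countRestr r s n := by
  rw [countSplit, powersetCard_zero, singleton_product, filter_map, card_map, countRestr_eq_card]
  simp [restrShape_empty]

lemma countSplit_zero_right (l r s : UTree) (n : ℕ) :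
    countSplit l r n 0 s = countRestr l s n := by
  rw [countSplit, powersetCard_zero, product_singleton, filter_map, card_map, countRestr_eq_card]
  simp [restrShape_empty]

def countShapes (u : UTree) (n : ℕ) (P : UTree → Prop) [DecidablePred P] : ℕ :=
  #{A ∈ (range u.numLeaves).powersetCard n | ∃ a ∈ restrShape u A, P a}

lemma countShapes_true (u : UTree) {n : ℕ} (hn : 0 < n) :
    countShapes u n (fun _ => True) = u.numLeaves.choose n := by
  rw [countShapes, filter_true_of_mem, card_powersetCard, card_range]
  intro A hA
  obtain ⟨hsub, hcard⟩ := mem_powersetCard.1 hA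
  obtain ⟨t, ht, -⟩ := exists_restrShape_eq_some hsub (card_pos.1 (hcard ▸ hn))
  exact ⟨t.shape, ht, trivial⟩

lemma countShapes_false (u : UTree) (n : ℕ) : countShapes u n (fun _ => False) = 0 := by
  simp [countShapes]

lemma countShapes_eq_countRestr (u s : UTree) (n : ℕ) :
    countShapes u n (· = RBT.canon s) = countRestr u s n := by
  simp [countShapes, countRestr_eq_card]

lemma countSplit_eq_mul {l r : UTree} (s : UTree) (i j : ℕ) (P₁ P₂ : UTree → Prop)
    [DecidablePred P₁] [DecidablePred P₂]
    (h : ∀ a ∈ smallShapes i, ∀ b ∈ smallShapes j,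
      RBT.canonNode a b = RBT.canon s ↔ P₁ a ∧ P₂ b)
    (hi : 0 < i := by omega) (hj : 0 < j := by omega) (hi5 : i ≤ 5 := by omega)
    (hj5 : j ≤ 5 := by omega) :
    countSplit l r i j s = countShapes l i P₁ * countShapes r j P₂ := by
  rw [countSplit, countShapes, countShapes, ← card_product, ← filter_product]
  refine congrArg card (filter_congr fun ⟨A, B⟩ hx => ?_)
  obtain ⟨⟨hA, hcardA⟩, hB, hcardB⟩ := And.imp mem_powersetCard.1 mem_powersetCard.1
    (mem_product.1 hx)
  obtain ⟨t₁, ht₁, hn₁⟩ := exists_restrShape_eq_some hA (card_pos.1 (hcardA ▸ hi))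
  obtain ⟨t₂, ht₂, hn₂⟩ := exists_restrShape_eq_some hB (card_pos.1 (hcardB ▸ hj))
  have := h _ (hcardA ▸ hn₁ ▸ shape_mem_smallShapes t₁ (by omega))
    _ (hcardB ▸ hn₂ ▸ shape_mem_smallShapes t₂ (by omega))
  simpa [ht₁, ht₂, Option.merge] using this

lemma numLeaves_fullBal (k : ℕ) : (fullBal k).numLeaves = 2 ^ k := by
  induction k with
  | zero => rfl
  | succ k ih => rw [fullBal, RBT.numLeaves, ih, pow_succ, mul_two]

lemma countRestr_fullBal_zero (s : UTree) {n : ℕ} (hn : 1 < n) :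
    countRestr (fullBal 0) s n = 0 := by
  rw [countRestr_eq_card, numLeaves_fullBal, powersetCard_eq_empty.2 (by simpa using hn)]
  rfl

lemma countRestr_fullBal_succ_bal4U (k : ℕ) :
    countRestr (fullBal (k + 1)) bal4U 4 =
      2 * countRestr (fullBal k) bal4U 4 + (2 ^ k).choose 2 ^ 2 := by
  rw [fullBal, countRestr_node]
  simp only [sum_range_succ, sum_range_zero, countSplit_zero_left, countSplit_zero_right,
    Nat.reduceSub, zero_add]
  rw [countSplit_eq_mul bal4U 1 3 (fun _ => False) (fun _ => False) (by decide),
    countSplit_eq_mul bal4U 2 2 (fun _ => True) (fun _ => True) (by decide),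
    countSplit_eq_mul bal4U 3 1 (fun _ => False) (fun _ => False) (by decide)]
  simp only [countShapes_true, countShapes_false, numLeaves_fullBal, Nat.ofNat_pos]
  ring

lemma countRestr_fullBal_succ_bal5U (k : ℕ) :
    countRestr (fullBal (k + 1)) bal5U 5 =
      2 * countRestr (fullBal k) bal5U 5 + 2 * ((2 ^ k).choose 2 * (2 ^ k).choose 3) := by
  rw [fullBal, countRestr_node]
  simp only [sum_range_succ, sum_range_zero, countSplit_zero_left, countSplit_zero_right,
    Nat.reduceSub, zero_add]
  rw [countSplit_eq_mul bal5U 1 4 (fun _ => False) (fun _ => False) (by decide),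
    countSplit_eq_mul bal5U 2 3 (fun _ => True) (fun _ => True) (by decide),
    countSplit_eq_mul bal5U 3 2 (fun _ => True) (fun _ => True) (by decide),
    countSplit_eq_mul bal5U 4 1 (fun _ => False) (fun _ => False) (by decide)]
  simp only [countShapes_true, countShapes_false, numLeaves_fullBal, Nat.ofNat_pos]
  ring

lemma countRestr_fullBal_succ_gir5U (k : ℕ) :
    countRestr (fullBal (k + 1)) gir5U 5 =
      2 * countRestr (fullBal k) gir5U 5 + 2 * (2 ^ k * countRestr (fullBal k) bal4U 4) := by
  rw [fullBal, countRestr_node]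
  simp only [sum_range_succ, sum_range_zero, countSplit_zero_left, countSplit_zero_right,
    Nat.reduceSub, zero_add]
  rw [countSplit_eq_mul gir5U 1 4 (fun _ => True) (· = RBT.canon bal4U) (by decide),
    countSplit_eq_mul gir5U 2 3 (fun _ => False) (fun _ => False) (by decide),
    countSplit_eq_mul gir5U 3 2 (fun _ => False) (fun _ => False) (by decide),
    countSplit_eq_mul gir5U 4 1 (· = RBT.canon bal4U) (fun _ => True) (by decide)]
  simp only [countShapes_true, countShapes_false, countShapes_eq_countRestr, numLeaves_fullBal,
    zero_lt_one, Nat.choose_one_right]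
  ring

section ChooseFormulas

variable {K : Type} [Field K] [CharZero K]

lemma cast_choose_three (n : ℕ) : (n.choose 3 : K) = n * (n - 1) * (n - 2) / 6 := by
  rw [Nat.cast_choose_eq_descPochhammer_div]
  simp [descPochhammer_succ_eval, Nat.factorial]

lemma cast_choose_five (n : ℕ) :
    (n.choose 5 : K) = n * (n - 1) * (n - 2) * (n - 3) * (n - 4) / 120 := by
  rw [Nat.cast_choose_eq_descPochhammer_div]
  simp [descPochhammer_succ_eval, Nat.factorial]

end ChooseFormulas

lemma countRestr_fullBal_bal4U (k : ℕ) :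
    168 * (countRestr (fullBal k) bal4U 4 : ℝ) =
      2 ^ k * (2 ^ k - 1) * (2 ^ k - 2) * (3 * 2 ^ k - 5) := by
  induction k with
  | zero => rw [countRestr_fullBal_zero _ (by norm_num)]; norm_num
  | succ k ih =>
    rw [countRestr_fullBal_succ_bal4U]
    push_cast
    rw [Nat.cast_choose_two]
    push_cast
    linear_combination 2 * ih

lemma countRestr_fullBal_bal5U (k : ℕ) :
    1260 * (countRestr (fullBal k) bal5U 5 : ℝ) =
      2 ^ k * (2 ^ k - 1) * (2 ^ k - 2) * (2 ^ k - 4) * (7 * 2 ^ k - 11) := by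
  induction k with
  | zero => rw [countRestr_fullBal_zero _ (by norm_num)]; norm_num
  | succ k ih =>
    rw [countRestr_fullBal_succ_bal5U]
    push_cast
    rw [Nat.cast_choose_two, cast_choose_three]
    push_cast
    linear_combination 2 * ih

lemma seven_mul_countRestr_fullBal_gir5U (k : ℕ) :
    7 * countRestr (fullBal k) gir5U 5 = (2 ^ k).choose 5 := by
  suffices h : 7 * (countRestr (fullBal k) gir5U 5 : ℝ) = ((2 ^ k).choose 5 : ℝ) by
    exact_mod_cast h
  induction k with
  | zero =>
    rw [countRestr_fullBal_zero _ (by norm_num), Nat.choose_eq_zero_of_lt (by norm_num)]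
    simp
  | succ k ih =>
    rw [countRestr_fullBal_succ_gir5U]
    push_cast
    rw [cast_choose_five] at ih ⊢
    push_cast at ih ⊢
    linear_combination 2 * ih + (2 ^ k / 12 : ℝ) * countRestr_fullBal_bal4U k

lemma sum_countRestr_fullBal_five (k : ℕ) :
    countRestr (fullBal k) (combU 5) 5 + countRestr (fullBal k) gir5U 5 +
      countRestr (fullBal k) bal5U 5 = (2 ^ k).choose 5 := by
  simpa [smallShapes, numLeaves_fullBal, add_assoc] using
    sum_countRestr_smallShapes (fullBal k) (n := 5) (by norm_num) le_rfl

section Density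

variable {k : ℕ}

lemma cast_choose_two_pow_five_ne_zero (hk : 3 ≤ k) : ((2 ^ k).choose 5 : ℝ) ≠ 0 := by
  have : 5 ≤ 2 ^ k := le_trans (by norm_num) (Nat.pow_le_pow_right two_pos hk)
  exact_mod_cast (Nat.choose_pos this).ne'

lemma density_gir5U (hk : 3 ≤ k) :
    (countRestr (fullBal k) gir5U 5 : ℝ) / ((2 ^ k).choose 5 : ℝ) = 1 / 7 := by
  rw [div_eq_iff (cast_choose_two_pow_five_ne_zero hk), ← seven_mul_countRestr_fullBal_gir5U]
  push_cast
  ring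

lemma density_bal5U (hk : 3 ≤ k) :
    (countRestr (fullBal k) bal5U 5 : ℝ) / ((2 ^ k).choose 5 : ℝ) =
      2 / 3 + 20 / (21 * ((2 : ℝ) ^ k - 3)) := by
  have h8 : (8 : ℝ) ≤ 2 ^ k := by exact_mod_cast Nat.pow_le_pow_right two_pos hk
  have hb : (countRestr (fullBal k) bal5U 5 : ℝ) =
      2 ^ k * (2 ^ k - 1) * (2 ^ k - 2) * (2 ^ k - 4) * (7 * 2 ^ k - 11) / 1260 := by
    rw [eq_div_iff (by norm_num), mul_comm]
    exact countRestr_fullBal_bal5U k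
  have h0 : (2 : ℝ) ^ k ≠ 0 := by positivity
  have h1 : (2 : ℝ) ^ k - 1 ≠ 0 := by linarith
  have h2 : (2 : ℝ) ^ k - 2 ≠ 0 := by linarith
  have h3 : (2 : ℝ) ^ k - 3 ≠ 0 := by linarith
  have h4 : (2 : ℝ) ^ k - 4 ≠ 0 := by linarith
  rw [hb, cast_choose_five]
  push_cast
  field_simp
  ring

lemma density_combU5 (hk : 3 ≤ k) :
    (countRestr (fullBal k) (combU 5) 5 : ℝ) / ((2 ^ k).choose 5 : ℝ) =
      4 / 21 - 20 / (21 * ((2 : ℝ) ^ k - 3)) := by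
  have hc : (countRestr (fullBal k) (combU 5) 5 : ℝ) = (2 ^ k).choose 5 -
      countRestr (fullBal k) gir5U 5 - countRestr (fullBal k) bal5U 5 := by
    rw [← sum_countRestr_fullBal_five]
    push_cast
    ring
  rw [hc, sub_div, sub_div, div_self (cast_choose_two_pow_five_ne_zero hk), density_gir5U hk,
    density_bal5U hk]
  ring

end Density

open Filter Topology

lemma tendsto_div_two_pow_sub_three (c d : ℝ) (hd : 0 < d) :
    Tendsto (fun j : ℕ => c / (d * ((2 : ℝ) ^ j - 3))) atTop (𝓝 0) := by
  refine tendsto_const_nhds.div_atTop (Tendsto.const_mul_atTop hd ?_)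
  exact tendsto_atTop_add_const_right _ _ (tendsto_pow_atTop_atTop_of_one_lt one_lt_two)

/-- For `k ≥ 3`, let `b₅(k)` and `g₅(k)` count the `5`-element
leaf subsets of the complete balanced binary tree with `2^k` leaves whose
restriction trees have shapes `Bal_5` and `Gir_5` respectively.  Then
`b₅(k) = (1/315)·2^{k−2}·(2^k−4)(2^k−2)(2^k−1)(7·2^k−11)` and
`g₅(k) = (1/105)·2^{k−3}·(2^k−4)(2^k−3)(2^k−2)(2^k−1)`; the induced subtree
densities satisfy `b₅(k)/C(2^k,5) = 2/3 + 20/(21(2^k−3))` and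
`g₅(k)/C(2^k,5) = 1/7`, and as `k → ∞` the density vector for
`(Comb_5, Gir_5, Bal_5)` converges to `(4/21, 1/7, 2/3)`. -/
theorem fullBal_five_leaf_densities (k : ℕ) (hk : 3 ≤ k) :
    ((countRestr (fullBal k) bal5U 5 : ℝ) =
        (1 / 315) * (2 : ℝ) ^ (k - 2) * ((2 : ℝ) ^ k - 4) * ((2 : ℝ) ^ k - 2) *
          ((2 : ℝ) ^ k - 1) * (7 * (2 : ℝ) ^ k - 11)) ∧
    ((countRestr (fullBal k) gir5U 5 : ℝ) =
        (1 / 105) * (2 : ℝ) ^ (k - 3) * ((2 : ℝ) ^ k - 4) * ((2 : ℝ) ^ k - 3) *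
          ((2 : ℝ) ^ k - 2) * ((2 : ℝ) ^ k - 1)) ∧
    ((countRestr (fullBal k) bal5U 5 : ℝ) / (Nat.choose (2 ^ k) 5 : ℝ) =
        2 / 3 + 20 / (21 * ((2 : ℝ) ^ k - 3))) ∧
    ((countRestr (fullBal k) gir5U 5 : ℝ) / (Nat.choose (2 ^ k) 5 : ℝ) = 1 / 7) ∧
    Filter.Tendsto
      (fun j : ℕ =>
        ((countRestr (fullBal j) (combU 5) 5 : ℝ) / (Nat.choose (2 ^ j) 5 : ℝ),
         (countRestr (fullBal j) gir5U 5 : ℝ) / (Nat.choose (2 ^ j) 5 : ℝ),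
         (countRestr (fullBal j) bal5U 5 : ℝ) / (Nat.choose (2 ^ j) 5 : ℝ)))
      Filter.atTop (nhds (4 / 21, 1 / 7, 2 / 3)) := by
  refine ⟨?_, ?_, density_bal5U hk, density_gir5U hk, ?_⟩
  · have h4 : (2 : ℝ) ^ k = 2 ^ (k - 2) * 4 := by
      rw [← pow_sub_mul_pow 2 (by omega : 2 ≤ k)]; norm_num
    have hb := countRestr_fullBal_bal5U k
    rw [h4] at hb ⊢
    linear_combination hb / 1260
  · have h8 : (2 : ℝ) ^ k = 2 ^ (k - 3) * 8 := by
      rw [← pow_sub_mul_pow 2 hk]; norm_num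
    have hg : (7 * countRestr (fullBal k) gir5U 5 : ℝ) = (2 ^ k).choose 5 := by
      exact_mod_cast seven_mul_countRestr_fullBal_gir5U k
    rw [cast_choose_five, Nat.cast_pow, Nat.cast_ofNat, h8] at hg
    rw [h8]
    linear_combination hg / 7
  · have he := tendsto_div_two_pow_sub_three 20 21 (by norm_num)
    have hlim := ((tendsto_const_nhds (x := (4 / 21 : ℝ))).sub he).prodMk_nhds
      ((tendsto_const_nhds (x := (1 / 7 : ℝ))).prodMk_nhds
        ((tendsto_const_nhds (x := (2 / 3 : ℝ))).add he))
    rw [sub_zero, add_zero] at hlim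
    refine hlim.congr' (eventually_atTop.2 ⟨3, fun j hj => ?_⟩)
    dsimp only
    rw [density_combU5 hj, density_gir5U hj, density_bal5U hj]
end

section
/- Let (P_m)_{m≥1} be a sequence of polytopes in R^n with P_{m+1} ⊆ P_m for all m ≥ 1. Let L be the set of all points x ∈ R^n for which there exists a sequence (v_m)_{m≥1} with v_m a vertex (extreme point) of P_m for every m and v_m → x. Then ⋂_{m=1}^∞ P_m equals the closure of the convex hull of L. -/
/-!
By Krein–Milman it suffices that every extreme point `x` of `K = ⋂ m, P m` is a limit of extreme
points of the `P m`, i.e. that for every `ε > 0` eventually some extreme point of `P m` lies within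
`ε` of `x`. Otherwise, for infinitely many `m`, Krein–Milman puts `x` in the convex hull of
`S m = P m \ B(x, ε)`, hence, `S` being decreasing, in that of every `S m`. In finite dimension
convex hulls commute with decreasing intersections of compact sets, so `x` lies in the convex hull
of `⋂ m, S m ⊆ K \ {x}`; but `K \ {x}` is convex because `x` is extreme.
-/

open Set Filter Topology

theorem isCompact_iInter {X ι : Type*} [TopologicalSpace X] [T2Space X] [Nonempty ι]
    {S : ι → Set X} (hS : ∀ i, IsCompact (S i)) : IsCompact (⋂ i, S i) :=
  let i := Classical.arbitrary ι
  (hS i).of_isClosed_subset (isClosed_iInter fun j => (hS j).isClosed) (iInter_subset _ i)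

theorem exists_tendsto_of_forall_eventually_exists_dist_lt {α : Type*} [PseudoMetricSpace α]
    {A : ℕ → Set α} {x : α} (hA : ∀ m, (A m).Nonempty)
    (h : ∀ ε > 0, ∀ᶠ m in atTop, ∃ y ∈ A m, dist y x < ε) :
    ∃ v : ℕ → α, (∀ m, v m ∈ A m) ∧ Tendsto v atTop (𝓝 x) := by
  have hinf : Tendsto (fun m => Metric.infDist x (A m)) atTop (𝓝 0) :=
    tendsto_order.2 ⟨fun a ha => .of_forall fun m => ha.trans_le Metric.infDist_nonneg,
      fun ε hε => (h ε hε).mono fun m ⟨y, hy, hyx⟩ =>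
        (Metric.infDist_le_dist_of_mem hy).trans_lt (dist_comm x y ▸ hyx)⟩
  choose v hv hvx using fun m => (Metric.infDist_lt_iff (hA m)).1
    (lt_add_of_pos_right (Metric.infDist x (A m)) (Nat.one_div_pos_of_nat (n := m)))
  refine ⟨v, hv, tendsto_iff_dist_tendsto_zero.2 <| squeeze_zero (fun _ => dist_nonneg)
    (fun m => (dist_comm (v m) x).trans_le (hvx m).le) ?_⟩
  simpa using hinf.add tendsto_one_div_add_atTop_nhds_zero_nat

section FiniteDimensional

variable {E : Type*} [NormedAddCommGroup E] [NormedSpace ℝ E] [FiniteDimensional ℝ E]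

theorem convexHull_eq_image_stdSimplex_prod_pi (T : Set E) :
    convexHull ℝ T =
      (fun p : (Fin (Module.finrank ℝ E + 1) → ℝ) × (Fin (Module.finrank ℝ E + 1) → E) =>
          ∑ i, p.1 i • p.2 i) '' (stdSimplex ℝ _ ×ˢ univ.pi fun _ => T) := by
  classical
  refine Subset.antisymm (fun x hx => ?_) ?_
  -- Carathéodory: `finrank + 1` affinely independent points suffice; pad with zero weights.
  · obtain ⟨ι, _, z, w, hzT, hz, hw0, hw1, rfl⟩ := eq_pos_convex_span_of_mem_convexHull hx
    obtain ⟨e⟩ : Nonempty (ι ↪ Fin (Module.finrank ℝ E + 1)) :=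
      Function.Embedding.nonempty_of_card_le <| by
        simpa using hz.card_le_finrank_succ.trans (Nat.succ_le_succ (Submodule.finrank_le _))
    obtain ⟨i₀, -, -⟩ := Finset.exists_ne_zero_of_sum_ne_zero (hw1.trans_ne one_ne_zero)
    have hw_off : ∀ j ∉ range e, Function.extend e w 0 j = 0 := fun j hj =>
      Function.extend_apply' (f := ⇑e) w 0 j hj
    refine ⟨(Function.extend e w 0, Function.extend e z fun _ => z i₀), ⟨⟨fun j => ?_, ?_⟩,
      fun j _ => ?_⟩, ?_⟩
    · by_cases hj : j ∈ range e
      · obtain ⟨i, rfl⟩ := hj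
        simpa only [e.injective.extend_apply] using (hw0 i).le
      · exact (hw_off j hj).ge
    · exact (Fintype.sum_of_injective e e.injective w _ hw_off
        fun i => (e.injective.extend_apply _ _ _).symm).symm.trans hw1
    · by_cases hj : j ∈ range e
      · obtain ⟨i, rfl⟩ := hj
        simpa only [e.injective.extend_apply] using hzT (mem_range_self i)
      · simpa only [Function.extend_apply' (f := ⇑e) _ _ _ hj] using hzT (mem_range_self i₀)
    · refine (Fintype.sum_of_injective e e.injective _ _ (fun j hj => ?_) fun i => ?_).symm
      · simp only [hw_off j hj, zero_smul]
      · simp only [e.injective.extend_apply]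
  · rintro _ ⟨⟨w, v⟩, ⟨⟨hw0, hw1⟩, hv⟩, rfl⟩
    exact (convex_convexHull ℝ T).sum_mem (fun i _ => hw0 i) hw1
      fun i _ => subset_convexHull ℝ T (hv i (mem_univ i))

theorem IsCompact.convexHull {T : Set E} (hT : IsCompact T) : IsCompact (convexHull ℝ T) := by
  rw [convexHull_eq_image_stdSimplex_prod_pi]
  exact ((isCompact_stdSimplex ℝ _).prod (isCompact_univ_pi fun _ => hT)).image (by fun_prop)

theorem iInter_convexHull_subset_convexHull_iInter {S : ℕ → Set E} (hS : Antitone S)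
    (hSc : ∀ m, IsCompact (S m)) : ⋂ m, convexHull ℝ (S m) ⊆ convexHull ℝ (⋂ m, S m) := by
  intro x hx
  by_contra hxT
  obtain ⟨f, u, hfT, hfx⟩ := geometric_hahn_banach_closed_point (convex_convexHull ℝ _)
    (isCompact_iInter hSc).convexHull.isClosed hxT
  have hfar : (S 0 ∩ {y | u ≤ f y}) ∩ ⋂ m, S m = ∅ :=
    eq_empty_of_forall_notMem fun y ⟨⟨_, hyu⟩, hyT⟩ =>
      hyu.not_gt (hfT y (subset_convexHull ℝ _ hyT))
  have hfar_cpt : IsCompact (S 0 ∩ {y | u ≤ f y}) :=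
    (hSc 0).inter_right (isClosed_le continuous_const f.continuous)
  obtain ⟨m, hm⟩ :=
    hfar_cpt.elim_directed_family_closed S (fun m => (hSc m).isClosed) hfar hS.directed_ge
  have hSm : S m ⊆ {y | f y < u} := fun y hy => show f y < u from
    not_le.1 fun hyu => (eq_empty_iff_forall_notMem.1 hm) y ⟨⟨hS (Nat.zero_le m) hy, hyu⟩, hy⟩
  exact hfx.not_gt (convexHull_min hSm (convex_halfSpace_lt f.isLinear u) (mem_iInter.1 hx m))

theorem eventually_exists_mem_extremePoints_dist_lt {P : ℕ → Set E} (hP : Antitone P)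
    (hPc : ∀ m, IsCompact (P m)) (hPconv : ∀ m, Convex ℝ (P m)) {x : E}
    (hx : x ∈ extremePoints ℝ (⋂ m, P m)) {ε : ℝ} (hε : 0 < ε) :
    ∀ᶠ m in atTop, ∃ y ∈ extremePoints ℝ (P m), dist y x < ε := by
  by_contra hfreq
  simp only [not_eventually, not_exists, not_and, not_lt] at hfreq
  set S : ℕ → Set E := fun m => P m ∩ {y | ε ≤ dist y x}
  have hS : Antitone S := fun _ _ hmk => inter_subset_inter_left _ (hP hmk)
  have hSc : ∀ m, IsCompact (S m) := fun m =>
    (hPc m).inter_right (isClosed_le continuous_const (continuous_id.dist continuous_const))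
  have hxS : x ∈ ⋂ m, convexHull ℝ (S m) := by
    refine mem_iInter.2 fun m => ?_
    obtain ⟨k, hmk, hkfar⟩ := frequently_atTop.1 hfreq m
    have hxP : x ∈ P k := mem_iInter.1 (extremePoints_subset hx) k
    rw [← closure_convexHull_extremePoints (hPc k) (hPconv k)] at hxP
    refine closure_minimal (convexHull_mono fun y hy => hS hmk ?_) (hSc m).convexHull.isClosed hxP
    exact ⟨extremePoints_subset hy, hkfar y hy⟩
  have hTK : ⋂ m, S m ⊆ (⋂ m, P m) \ {x} := fun y hy =>
    ⟨mem_iInter.2 fun m => (mem_iInter.1 hy m).1, fun hyx => by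
      have := (mem_iInter.1 hy 0).2
      simp only [mem_singleton_iff.1 hyx, mem_ofPred_eq, dist_self] at this
      exact hε.not_ge this⟩
  have hKx : Convex ℝ ((⋂ m, P m) \ {x}) :=
    ((convex_iInter hPconv).mem_extremePoints_iff_convex_sdiff.1 hx).2
  exact (convexHull_min hTK hKx (iInter_convexHull_subset_convexHull_iInter hS hSc hxS)).2 rfl

theorem iInter_eq_closure_convexHull_extremePoint_limits {P : ℕ → Set E} (hP : Antitone P)
    (hPc : ∀ m, IsCompact (P m)) (hPconv : ∀ m, Convex ℝ (P m)) :
    ⋂ m, P m = closure (convexHull ℝ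
      {x | ∃ v : ℕ → E, (∀ m, v m ∈ extremePoints ℝ (P m)) ∧ Tendsto v atTop (𝓝 x)}) := by
  have hKc : IsCompact (⋂ m, P m) := isCompact_iInter hPc
  have hKconv : Convex ℝ (⋂ m, P m) := convex_iInter hPconv
  refine Subset.antisymm ?_ (closure_minimal (convexHull_min ?_ hKconv) hKc.isClosed)
  · conv_lhs => rw [← closure_convexHull_extremePoints hKc hKconv]
    refine closure_mono (convexHull_mono fun x hx => ?_)
    have hxP : ∀ m, x ∈ P m := mem_iInter.1 (extremePoints_subset hx)
    exact exists_tendsto_of_forall_eventually_exists_dist_lt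
      (fun m => (hPc m).extremePoints_nonempty ⟨x, hxP m⟩)
      fun ε hε => eventually_exists_mem_extremePoints_dist_lt hP hPc hPconv hx hε
  · rintro x ⟨v, hv, hvx⟩
    exact mem_iInter.2 fun k => (hPc k).isClosed.mem_of_tendsto hvx <|
      (eventually_ge_atTop k).mono fun m hkm => hP hkm (extremePoints_subset (hv m))

end FiniteDimensional

/-- Let `(P_m)` be a nested sequence of polytopes in `ℝ^n`
(`P_{m+1} ⊆ P_m`), and let `L` be the set of limits of sequences `(v_m)` with
`v_m` a vertex (extreme point) of `P_m` for every `m`.  Then `⋂_m P_m` equals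
the closure of the convex hull of `L`. -/
theorem iInter_polytopes_eq_closure_convexHull_vertex_limits
    (n : ℕ) (P : ℕ → Set (Fin n → ℝ))
    (hpoly : ∀ m, ∃ V : Finset (Fin n → ℝ), P m = convexHull ℝ (V : Set (Fin n → ℝ)))
    (hnested : ∀ m, P (m + 1) ⊆ P m) :
    (⋂ m, P m) =
      closure (convexHull ℝ
        {x : Fin n → ℝ | ∃ v : ℕ → (Fin n → ℝ),
          (∀ m, v m ∈ Set.extremePoints ℝ (P m)) ∧
            Filter.Tendsto v Filter.atTop (nhds x)}) := by
  have hPc_conv : ∀ m, IsCompact (P m) ∧ Convex ℝ (P m) := fun m => by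
    obtain ⟨V, hV⟩ := hpoly m
    exact hV ▸ ⟨V.finite_toSet.isCompact_convexHull ℝ, convex_convexHull ℝ _⟩
  exact iInter_eq_closure_convexHull_extremePoint_limits (antitone_nat_of_succ_le hnested)
    (fun m => (hPc_conv m).1) fun m => (hPc_conv m).2
end
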